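/- arXiv:1701.02695 — 6 statements merged into one kernel-verified Lean document; each statement's English description precedes it below -/
import Mathlib

section
/- Let f : ℝ → ℝ be continuous with an m-orbit B, m > 2, with permutation σ. Then the set {i ∈ {1,…,m} : σ(i) > i} is nonempty; letting r* be its largest element, one has 1 ≤ r* ≤ m−1 and the digraph of B contains the loop J_{r*} → J_{r*}. -/
/-- `x` is a periodic point of `f` of (exact) period `n`. -/
def PeriodicPtOfPeriod (f : ℝ → ℝ) (n : ℕ) (x : ℝ) : Prop :=
  f^[n] x = x ∧ ∀ j, 1 ≤ j → j < n → f^[j] x ≠ x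

/-- `β 1 < β 2 < ⋯ < β m` is an `m`-orbit of `f` with permutation `σ`:
each `β t` is a periodic point of period `m`, `σ` permutes `{1,…,m}`,
and `f (β t) = β (σ t)`. -/
def IsOrbitWithPerm (f : ℝ → ℝ) (m : ℕ) (β : ℕ → ℝ) (σ : ℕ → ℕ) : Prop :=
  StrictMonoOn β (Set.Icc 1 m) ∧
  (∀ t ∈ Set.Icc 1 m, PeriodicPtOfPeriod f m (β t)) ∧
  Set.BijOn σ (Set.Icc 1 m) (Set.Icc 1 m) ∧
  (∀ t ∈ Set.Icc 1 m, f (β t) = β (σ t))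

/-- The digraph of an orbit with permutation `σ` has an edge `J i → J s`,
i.e. `J s ⊆ <f (β i), f (β (i+1))>`. -/
def HasEdge (σ : ℕ → ℕ) (i s : ℕ) : Prop :=
  min (σ i) (σ (i+1)) ≤ s ∧ s + 1 ≤ max (σ i) (σ (i+1))

/-- The digraph of an `m`-orbit, `m > 2`, contains a loop at the largest index
`r*` with `σ r* > r*`. -/
theorem digraph_has_loop (f : ℝ → ℝ) (hf : Continuous f) (m : ℕ) (hm : 2 < m)
    (β : ℕ → ℝ) (σ : ℕ → ℕ) (horb : IsOrbitWithPerm f m β σ) :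
    (∃ i ∈ Set.Icc 1 m, i < σ i) ∧
    ∀ rstar, rstar ∈ Set.Icc 1 m → rstar < σ rstar →
      (∀ i ∈ Set.Icc 1 m, i < σ i → i ≤ rstar) →
      1 ≤ rstar ∧ rstar ≤ m - 1 ∧ HasEdge σ rstar rstar := by
  obtain ⟨hmono, hper, hbij, hmap⟩ := horb
  -- σ has no fixed points on Icc 1 m
  have hnofix : ∀ t ∈ Set.Icc 1 m, σ t ≠ t := by
    intro t ht heq
    have h1 : f (β t) = β t := by rw [hmap t ht, heq]
    have := (hper t ht).2 1 le_rfl (by omega)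
    simp [Function.iterate_one] at this
    exact this h1
  have h1m : (1 : ℕ) ∈ Set.Icc 1 m := ⟨le_rfl, by omega⟩
  have hσ1 : σ 1 ∈ Set.Icc 1 m := hbij.1 h1m
  have hex : ∃ i ∈ Set.Icc 1 m, i < σ i := by
    refine ⟨1, h1m, ?_⟩
    have := hnofix 1 h1m
    have := hσ1.1
    omega
  refine ⟨hex, ?_⟩
  intro r hr hlt hmax
  have hσr : σ r ∈ Set.Icc 1 m := hbij.1 hr
  -- r ≠ m since σ r > r and σ r ≤ m
  have hrm : r ≤ m - 1 := by
    have := hσr.2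
    omega
  have hr1 : r + 1 ∈ Set.Icc 1 m := ⟨by omega, by omega⟩
  have hσr1 : σ (r+1) ∈ Set.Icc 1 m := hbij.1 hr1
  have hle : σ (r+1) ≤ r := by
    by_contra h
    have h2 : r + 1 < σ (r+1) ∨ σ (r+1) = r + 1 := by omega
    rcases h2 with h2 | h2
    · have := hmax (r+1) hr1 h2; omega
    · exact hnofix (r+1) hr1 h2
  exact ⟨hr.1, hrm, ⟨le_trans (min_le_right _ _) hle,
    le_trans hlt (le_max_left _ _)⟩⟩
end

section
/- Let f : ℝ → ℝ be continuous with an m-orbit B, m > 2. For every r with 1 ≤ r ≤ m−1: (a) there exists r'' with r'' ≠ r and J_r → J_{r''}; (b) there exists r' with J_{r'} → J_r; (c) if it is not the case that m is even and 2r = m, then r' in (b) can be chosen with r' ≠ r. -/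
open Set Function

theorem hasEdge_iff_not_iff {σ : ℕ → ℕ} {s r : ℕ} :
    HasEdge σ s r ↔ ¬(σ s ≤ r ↔ σ (s + 1) ≤ r) := by
  unfold HasEdge
  omega

theorem Nat.iff_of_forall_mem_Ico_iff_succ {Q : ℕ → Prop} {a b : ℕ}
    (h : ∀ s ∈ Ico a b, (Q s ↔ Q (s + 1))) : ∀ t ∈ Icc a b, (Q t ↔ Q a) := by
  rintro t ⟨hat, htb⟩
  induction t, hat using Nat.le_induction with
  | base => rfl
  | succ t hat ih => exact (h t ⟨hat, htb⟩).symm.trans (ih (by omega))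

theorem Nat.exists_not_iff_succ {Q : ℕ → Prop} {m t t' : ℕ} (ht : t ∈ Icc 1 m)
    (ht' : t' ∈ Icc 1 m) (hQt : Q t) (hQt' : ¬Q t') :
    ∃ s ∈ Icc 1 (m - 1), ¬(Q s ↔ Q (s + 1)) := by
  by_contra! hconst
  have hchain := Nat.iff_of_forall_mem_Ico_iff_succ (Q := Q) (a := 1) (b := m)
    fun s ⟨h1, h2⟩ ↦ hconst s ⟨h1, by omega⟩
  exact hQt' ((hchain t' ht').2 ((hchain t ht).1 hQt))

theorem Nat.card_Icc_le_of_mapsTo_of_injOn {σ : ℕ → ℕ} {a b c d : ℕ}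
    (hmaps : MapsTo σ (Icc a b) (Icc c d)) (hinj : InjOn σ (Icc a b)) :
    b + 1 - a ≤ d + 1 - c := by
  simp only [← Finset.coe_Icc] at hmaps hinj
  simpa using Finset.card_le_card_of_injOn σ hmaps hinj

namespace IsOrbitWithPerm

variable {f : ℝ → ℝ} {m : ℕ} {β : ℕ → ℝ} {σ : ℕ → ℕ}

theorem mapsTo (h : IsOrbitWithPerm f m β σ) : MapsTo σ (Icc 1 m) (Icc 1 m) := h.2.2.1.mapsTo

theorem injOn (h : IsOrbitWithPerm f m β σ) : InjOn σ (Icc 1 m) := h.2.2.1.injOn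

theorem surjOn (h : IsOrbitWithPerm f m β σ) : SurjOn σ (Icc 1 m) (Icc 1 m) := h.2.2.1.surjOn

theorem iterate_apply (h : IsOrbitWithPerm f m β σ) (k : ℕ) {t : ℕ} (ht : t ∈ Icc 1 m) :
    f^[k] (β t) = β (σ^[k] t) := by
  induction k with
  | zero => rfl
  | succ k ih =>
    rw [iterate_succ_apply', ih, iterate_succ_apply', h.2.2.2 _ (h.mapsTo.iterate k ht)]

theorem iterate_ne_self (h : IsOrbitWithPerm f m β σ) {k t : ℕ} (ht : t ∈ Icc 1 m)
    (hk : 0 < k) (hkm : k < m) : σ^[k] t ≠ t := fun heq ↦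
  (h.2.1 t ht).2 k hk hkm (by rw [h.iterate_apply k ht, heq])

theorem injOn_iterate (h : IsOrbitWithPerm f m β σ) {t : ℕ} (ht : t ∈ Icc 1 m) :
    InjOn (σ^[·] t) (Iio m) := by
  intro j hj k hk heq
  wlog hjk : j < k generalizing j k
  · rcases (not_lt.1 hjk).eq_or_lt with rfl | hkj
    · rfl
    · exact (this hk hj heq.symm hkj).symm
  refine absurd ?_ (h.iterate_ne_self (h.mapsTo.iterate j ht) (Nat.sub_pos_of_lt hjk)
    (by simp only [mem_Iio] at hk; omega))
  simp only at heq
  rw [← iterate_add_apply, Nat.sub_add_cancel hjk.le, heq]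

theorem not_mapsTo_Icc (h : IsOrbitWithPerm f m β σ) {r : ℕ} (hr : r ∈ Icc 1 (m - 1)) :
    ¬MapsTo σ (Icc 1 r) (Icc 1 r) := by
  obtain ⟨hr1, hrm⟩ := hr
  intro hmaps
  have hcard := Finset.card_le_card_of_injOn (s := Finset.range m) (t := Finset.Icc 1 r)
    (σ^[·] 1) (fun k _ ↦ by simpa using hmaps.iterate k ⟨le_rfl, hr1⟩)
    (by rw [Finset.coe_range]; exact h.injOn_iterate ⟨le_rfl, by omega⟩)
  simp only [Finset.card_range, Nat.card_Icc] at hcard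
  omega

theorem exists_hasEdge_ne (h : IsOrbitWithPerm f m β σ) (hm : 2 < m) {r : ℕ}
    (hr : r ∈ Icc 1 (m - 1)) : ∃ s ∈ Icc 1 (m - 1), s ≠ r ∧ HasEdge σ r s := by
  obtain ⟨hr1, hrm⟩ := hr
  have hr : r ∈ Icc 1 m := ⟨hr1, by omega⟩
  have hr' : r + 1 ∈ Icc 1 m := ⟨by omega, by omega⟩
  have hσr := h.mapsTo hr
  have hσr' := h.mapsTo hr'
  have hne : σ r ≠ σ (r + 1) := fun heq ↦ by have := h.injOn hr hr' heq; omega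
  have hfix : σ r ≠ r := h.iterate_ne_self (k := 1) hr one_pos (by omega)
  have hswap : ¬(σ r = r + 1 ∧ σ (r + 1) = r) := fun ⟨h1, h2⟩ ↦
    h.iterate_ne_self (k := 2) hr two_pos hm (by simp [h1, h2])
  simp only [mem_Icc] at hσr hσr'
  -- If `min (σ r) (σ (r + 1)) = r`, then `σ (r + 1) = r` and `σ r ≥ r + 2`, so `J r → J (r + 1)`.
  by_cases hmin : min (σ r) (σ (r + 1)) = r
  · exact ⟨r + 1, ⟨by omega, by omega⟩, by omega, by unfold HasEdge; omega⟩
  · exact ⟨min (σ r) (σ (r + 1)), ⟨by omega, by omega⟩, hmin, by unfold HasEdge; omega⟩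

theorem exists_hasEdge_to (h : IsOrbitWithPerm f m β σ) {r : ℕ} (hr : r ∈ Icc 1 (m - 1)) :
    ∃ s ∈ Icc 1 (m - 1), HasEdge σ s r := by
  obtain ⟨hr1, hrm⟩ := hr
  obtain ⟨t, ht, htr⟩ := h.surjOn (⟨hr1, by omega⟩ : r ∈ Icc 1 m)
  obtain ⟨t', ht', ht'm⟩ := h.surjOn (⟨by omega, le_rfl⟩ : m ∈ Icc 1 m)
  simp only [hasEdge_iff_not_iff]
  exact Nat.exists_not_iff_succ (Q := (σ · ≤ r)) ht ht' htr.le (by omega)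

theorem exists_hasEdge_to_ne (h : IsOrbitWithPerm f m β σ) {r : ℕ} (hr : r ∈ Icc 1 (m - 1))
    (hmr : m ≠ 2 * r) : ∃ s ∈ Icc 1 (m - 1), s ≠ r ∧ HasEdge σ s r := by
  obtain ⟨s, hs, hedge⟩ := h.exists_hasEdge_to hr
  by_contra! honly
  obtain rfl : s = r := by_contra fun hsr ↦ honly s hs hsr hedge
  obtain ⟨hs1, hsm⟩ := hs
  simp only [hasEdge_iff_not_iff, not_not] at honly hedge
  have hlow := Nat.iff_of_forall_mem_Ico_iff_succ (Q := (σ · ≤ s)) (a := 1) (b := s)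
    fun t ⟨h1, h2⟩ ↦ honly t ⟨h1, by omega⟩ (by omega)
  have hhigh := Nat.iff_of_forall_mem_Ico_iff_succ (Q := (σ · ≤ s)) (a := s + 1) (b := m)
    fun t ⟨h1, h2⟩ ↦ honly t ⟨by omega, by omega⟩ (by omega)
  have hσ : ∀ t ∈ Icc 1 m, σ t ∈ Icc 1 m := fun t ht ↦ h.mapsTo ht
  simp only [mem_Icc] at hlow hhigh hσ
  by_cases h1 : σ 1 ≤ s
  · exact h.not_mapsTo_Icc ⟨hs1, hsm⟩ fun t ⟨ht1, hts⟩ ↦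
      ⟨(hσ t ⟨ht1, by omega⟩).1, (hlow t ⟨ht1, hts⟩).2 h1⟩
  · -- `σ` exchanges `{1, …, s}` and `{s + 1, …, m}`.
    have hs' : σ (s + 1) ≤ s := by have := hlow s ⟨hs1, le_rfl⟩; omega
    have hleft : MapsTo σ (Icc 1 s) (Icc (s + 1) m) := fun t ⟨ht1, hts⟩ ↦ by
      have := hlow t ⟨ht1, hts⟩; have := hσ t ⟨ht1, by omega⟩
      exact ⟨by omega, by omega⟩
    have hright : MapsTo σ (Icc (s + 1) m) (Icc 1 s) := fun t ⟨ht1, htm⟩ ↦ by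
      have := hhigh t ⟨ht1, htm⟩; have := hσ t ⟨by omega, htm⟩
      exact ⟨by omega, by omega⟩
    have := Nat.card_Icc_le_of_mapsTo_of_injOn hleft
      (h.injOn.mono (Icc_subset_Icc_right (by omega)))
    have := Nat.card_Icc_le_of_mapsTo_of_injOn hright
      (h.injOn.mono (Icc_subset_Icc_left (by omega)))
    omega

end IsOrbitWithPerm

theorem digraph_in_out_edges_general (f : ℝ → ℝ) (m : ℕ)
    (hm : 2 < m) (β : ℕ → ℝ) (σ : ℕ → ℕ) (horb : IsOrbitWithPerm f m β σ) :
    ∀ r ∈ Set.Icc 1 (m-1),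
      (∃ r'' ∈ Set.Icc 1 (m-1), r'' ≠ r ∧ HasEdge σ r r'') ∧
      (∃ r' ∈ Set.Icc 1 (m-1), HasEdge σ r' r) ∧
      (¬ (Even m ∧ 2*r = m) →
        ∃ r' ∈ Set.Icc 1 (m-1), r' ≠ r ∧ HasEdge σ r' r) := fun r hr ↦
  ⟨horb.exists_hasEdge_ne hm hr, horb.exists_hasEdge_to hr, fun hmr ↦
    horb.exists_hasEdge_to_ne hr fun h2r ↦ hmr ⟨⟨r, by omega⟩, h2r.symm⟩⟩

/-- Every vertex of the digraph of an `m`-orbit, `m > 2`, has an outgoing edge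
to a different vertex and an incoming edge, which may be chosen from a
different vertex unless `m` is even and `2r = m`. -/
theorem digraph_in_out_edges (f : ℝ → ℝ) (hf : Continuous f) (m : ℕ)
    (hm : 2 < m) (β : ℕ → ℝ) (σ : ℕ → ℕ) (horb : IsOrbitWithPerm f m β σ) :
    ∀ r ∈ Set.Icc 1 (m-1),
      (∃ r'' ∈ Set.Icc 1 (m-1), r'' ≠ r ∧ HasEdge σ r r'') ∧
      (∃ r' ∈ Set.Icc 1 (m-1), HasEdge σ r' r) ∧
      (¬ (Even m ∧ 2*r = m) →
        ∃ r' ∈ Set.Icc 1 (m-1), r' ≠ r ∧ HasEdge σ r' r) :=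
  digraph_in_out_edges_general f m hm β σ horb
end

section
/- Let f : ℝ → ℝ be continuous with an m-orbit B, m > 2. For all integers a, b with 1 ≤ a < b ≤ m and (a,b) ≠ (1,m), there exist indices r', r'' ∈ {1,…,m−1} such that a ≤ r' ≤ b−1 (so J_{r'} ⊆ [β_a, β_b]), r'' < a or r'' ≥ b (so J_{r''} ⊄ [β_a, β_b]), and J_{r'} → J_{r''}. -/
/-- Discrete intermediate value: if `P t` holds and `P (t+d)` fails, there is a
crossing pair. -/
lemma cross_aux (P : ℕ → Prop) [DecidablePred P] :
    ∀ d t, P t → ¬ P (t + d) → ∃ i, t ≤ i ∧ i < t + d ∧ P i ∧ ¬ P (i + 1) := by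
  intro d
  induction d with
  | zero => intro t h h'; exact absurd h h'
  | succ n ih =>
    intro t ht h'
    by_cases hp : P (t + 1)
    · obtain ⟨i, h1, h2, h3, h4⟩ := ih (t + 1) hp (by
        have : t + 1 + n = t + (n + 1) := by omega
        rwa [this])
      exact ⟨i, by omega, by omega, h3, h4⟩
    · exact ⟨t, le_refl _, by omega, ht, hp⟩

/-- For every proper subinterval `[β a, β b]` of `[β 1, β m]` spanned by orbit
points, some interval `J r' ⊆ [β a, β b]` has an edge to some
`J r'' ⊄ [β a, β b]`. -/
theorem digraph_escapes_subinterval (f : ℝ → ℝ) (hf : Continuous f) (m : ℕ)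
    (hm : 2 < m) (β : ℕ → ℝ) (σ : ℕ → ℕ) (horb : IsOrbitWithPerm f m β σ) :
    ∀ a b : ℕ, 1 ≤ a → a < b → b ≤ m → ¬ (a = 1 ∧ b = m) →
      ∃ r' r'' : ℕ, r' ∈ Set.Icc 1 (m-1) ∧ a ≤ r' ∧ r' ≤ b - 1 ∧
        r'' ∈ Set.Icc 1 (m-1) ∧ (r'' < a ∨ b ≤ r'') ∧ HasEdge σ r' r'' := by
  obtain ⟨hmono, hper, hbij, hmap⟩ := horb
  intro a b ha hab hbm hne
  -- basic facts about σ
  have hσmem : ∀ t ∈ Set.Icc 1 m, σ t ∈ Set.Icc 1 m := hbij.mapsTo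
  have hmem : ∀ j, ∀ t ∈ Set.Icc 1 m, σ^[j] t ∈ Set.Icc 1 m := by
    intro j
    induction j with
    | zero => intro t ht; simpa using ht
    | succ n ih =>
      intro t ht
      rw [Function.iterate_succ_apply']
      exact hσmem _ (ih t ht)
  have hiter : ∀ j, ∀ t ∈ Set.Icc 1 m, f^[j] (β t) = β (σ^[j] t) := by
    intro j
    induction j with
    | zero => intro t ht; simp
    | succ n ih =>
      intro t ht
      rw [Function.iterate_succ_apply', ih t ht, hmap _ (hmem n t ht),
        Function.iterate_succ_apply']
  have hinjI : ∀ j, Set.InjOn σ^[j] (Set.Icc 1 m) := by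
    intro j
    induction j with
    | zero => simpa using Set.injOn_id _
    | succ n ih =>
      rw [Function.iterate_succ]
      exact ih.comp hbij.injOn hσmem
  have hdist : ∀ t ∈ Set.Icc 1 m, ∀ d, 1 ≤ d → d < m → σ^[d] t ≠ t := by
    intro t ht d h1 h2 heq
    exact (hper t ht).2 d h1 h2 (by rw [hiter d t ht, heq])
  -- the orbit of any point under σ hits everything in [1, m] within m steps
  have hcycle : ∀ t ∈ Set.Icc 1 m, ∀ s ∈ Set.Icc 1 m, ∃ j, j < m ∧ σ^[j] t = s := by
    intro t ht s hs
    have hdiff : ∀ j k, j < k → k < m → σ^[j] t ≠ σ^[k] t := by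
      intro j k hjk hkm heq
      have h1 : σ^[j] (σ^[k - j] t) = σ^[j] t := by
        rw [← Function.iterate_add_apply]
        have : j + (k - j) = k := by omega
        rw [this, heq]
      have h2 : σ^[k - j] t = t :=
        hinjI j (hmem (k - j) t ht) ht h1
      exact hdist t ht (k - j) (by omega) (by omega) h2
    have hinj : Set.InjOn (fun j => σ^[j] t) (Finset.range m : Finset ℕ) := by
      intro j hj k hk heq
      simp only [Finset.coe_range, Set.mem_Iio] at hj hk
      by_contra hne'
      rcases Nat.lt_or_ge j k with h | h
      · exact hdiff j k h hk heq
      · exact hdiff k j (by omega) hj heq.symm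
    have himg : Finset.image (fun j => σ^[j] t) (Finset.range m) ⊆ Finset.Icc 1 m := by
      intro x hx
      simp only [Finset.mem_image, Finset.mem_range] at hx
      obtain ⟨j, hj, rfl⟩ := hx
      have := hmem j t ht
      simpa [Finset.mem_Icc] using Set.mem_Icc.mp this
    have hcard : (Finset.image (fun j => σ^[j] t) (Finset.range m)).card = m := by
      rw [Finset.card_image_of_injOn hinj, Finset.card_range]
    have heq : Finset.image (fun j => σ^[j] t) (Finset.range m) = Finset.Icc 1 m :=
      Finset.eq_of_subset_of_card_le himg (by rw [hcard, Nat.card_Icc]; omega)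
    have hsmem : s ∈ Finset.image (fun j => σ^[j] t) (Finset.range m) := by
      rw [heq]; exact Finset.mem_Icc.mpr (Set.mem_Icc.mp hs)
    simp only [Finset.mem_image, Finset.mem_range] at hsmem
    obtain ⟨j, hj, hjs⟩ := hsmem
    exact ⟨j, hj, hjs⟩
  -- some point of [a,b] escapes under σ
  have hescape : ∃ t, a ≤ t ∧ t ≤ b ∧ (σ t < a ∨ b < σ t) := by
    by_contra h
    push_neg at h
    have hstay : ∀ j, a ≤ σ^[j] a ∧ σ^[j] a ≤ b := by
      intro j
      induction j with
      | zero => simp; omega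
      | succ n ih =>
        rw [Function.iterate_succ_apply']
        exact ⟨(h _ ih.1 ih.2).1, (h _ ih.1 ih.2).2⟩
    have haIcc : a ∈ Set.Icc 1 m := Set.mem_Icc.mpr ⟨ha, by omega⟩
    by_cases h1 : a = 1
    · have hbm' : b < m := lt_of_le_of_ne hbm (fun hb => hne ⟨h1, hb⟩)
      obtain ⟨j, _, hjs⟩ := hcycle a haIcc m (Set.mem_Icc.mpr ⟨by omega, le_refl _⟩)
      have := hstay j
      omega
    · obtain ⟨j, _, hjs⟩ := hcycle a haIcc 1 (Set.mem_Icc.mpr ⟨le_refl _, by omega⟩)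
      have := hstay j
      omega
  obtain ⟨t, hta, htb, hσt⟩ := hescape
  -- bounds on σ-values
  have hσbd : ∀ u, a ≤ u → u ≤ b → 1 ≤ σ u ∧ σ u ≤ m := by
    intro u h1 h2
    exact Set.mem_Icc.mp (hσmem u (Set.mem_Icc.mpr ⟨by omega, by omega⟩))
  have hσne : σ a ≠ σ (a + 1) := by
    intro h
    have := hbij.injOn (Set.mem_Icc.mpr ⟨ha, by omega⟩)
      (Set.mem_Icc.mpr (⟨by omega, by omega⟩ : 1 ≤ a + 1 ∧ a + 1 ≤ m)) h
    omega
  simp only [Set.mem_Icc, HasEdge]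
  have hbd1 := hσbd a (le_refl _) (by omega)
  have hbd2 := hσbd (a + 1) (by omega) (by omega)
  have hbdt := hσbd t hta htb
  rcases hσt with hlt | hgt
  · -- σ t < a; note a ≥ 2
    have ha2 : 2 ≤ a := by omega
    by_cases hall : ∀ u, a ≤ u → u ≤ b → σ u < a
    · have c1 := hall a (le_refl _) (by omega)
      have c2 := hall (a + 1) (by omega) (by omega)
      exact ⟨a, max (σ a) (σ (a + 1)) - 1, by omega⟩
    · push_neg at hall
      obtain ⟨u, hu1, hu2, hu3⟩ := hall
      rcases Nat.lt_or_ge t u with htu | htu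
      · obtain ⟨i, hi1, hi2, hi3, hi4⟩ :=
          cross_aux (fun x => σ x < a) (u - t) t hlt (by
            have : t + (u - t) = u := by omega
            rw [this]; omega)
        replace hi3 : σ i < a := hi3
        replace hi4 : a ≤ σ (i + 1) := by omega
        exact ⟨i, a - 1, by omega⟩
      · have htu' : u < t := by
          rcases Nat.lt_or_ge u t with h | h
          · exact h
          · have : u = t := by omega
            rw [this] at hu3
            omega
        obtain ⟨i, hi1, hi2, hi3, hi4⟩ :=
          cross_aux (fun x => a ≤ σ x) (t - u) u hu3 (by
            have : u + (t - u) = t := by omega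
            rw [this]; omega)
        replace hi3 : a ≤ σ i := hi3
        replace hi4 : σ (i + 1) < a := by omega
        exact ⟨i, a - 1, by omega⟩
  · -- b < σ t; note b ≤ m - 1
    have hbm1 : b ≤ m - 1 := by omega
    by_cases hall : ∀ u, a ≤ u → u ≤ b → b < σ u
    · have c1 := hall a (le_refl _) (by omega)
      have c2 := hall (a + 1) (by omega) (by omega)
      exact ⟨a, min (σ a) (σ (a + 1)), by omega⟩
    · push_neg at hall
      obtain ⟨u, hu1, hu2, hu3⟩ := hall
      rcases Nat.lt_or_ge t u with htu | htu
      · obtain ⟨i, hi1, hi2, hi3, hi4⟩ :=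
          cross_aux (fun x => b < σ x) (u - t) t hgt (by
            have : t + (u - t) = u := by omega
            rw [this]; omega)
        replace hi3 : b < σ i := hi3
        replace hi4 : σ (i + 1) ≤ b := by omega
        exact ⟨i, b, by omega⟩
      · have htu' : u < t := by
          rcases Nat.lt_or_ge u t with h | h
          · exact h
          · have : u = t := by omega
            rw [this] at hu3
            omega
        obtain ⟨i, hi1, hi2, hi3, hi4⟩ :=
          cross_aux (fun x => σ x ≤ b) (t - u) u hu3 (by
            have : u + (t - u) = t := by omega
            rw [this]; omega)
        replace hi3 : σ i ≤ b := hi3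
        replace hi4 : b < σ (i + 1) := by omega
        exact ⟨i, b, by omega⟩
end

section
/- Let f : ℝ → ℝ be continuous with an m-orbit B, m > 2, with permutation σ, and let r* be the largest element of the nonempty set {i : σ(i) > i}. Then for every r with 1 ≤ r ≤ m−1 there is a directed path in the digraph of B from J_{r*} to J_r, i.e. a finite sequence s_0 = r*, s_1, …, s_N = r in {1,…,m−1} with J_{s_t} → J_{s_{t+1}} for all 0 ≤ t < N. -/
/-- Reachability by a directed path from `rstar`. -/
def Reach (σ : ℕ → ℕ) (m rstar r : ℕ) : Prop :=
  ∃ (N : ℕ) (s : ℕ → ℕ), s 0 = rstar ∧ s N = r ∧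
    (∀ t ≤ N, s t ∈ Set.Icc 1 (m-1)) ∧
    (∀ t < N, HasEdge σ (s t) (s (t+1)))

lemma reach_self (σ : ℕ → ℕ) (m rstar : ℕ) (h : rstar ∈ Set.Icc 1 (m-1)) :
    Reach σ m rstar rstar :=
  ⟨0, fun _ => rstar, rfl, rfl, fun _ _ => h, fun t ht => absurd ht (Nat.not_lt_zero t)⟩

lemma reach_step {σ : ℕ → ℕ} {m rstar i r : ℕ} (h : Reach σ m rstar i)
    (hr : r ∈ Set.Icc 1 (m-1)) (he : HasEdge σ i r) : Reach σ m rstar r := by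
  obtain ⟨N, s, h0, hN, hmem, hedge⟩ := h
  refine ⟨N+1, fun t => if t ≤ N then s t else r, by simp [h0], by simp, ?_, ?_⟩
  · intro t ht
    by_cases h' : t ≤ N
    · simpa [h'] using hmem t h'
    · simpa [h'] using hr
  · intro t ht
    rcases Nat.lt_or_ge t N with h' | h'
    · have ha : t ≤ N := h'.le
      have hb : t + 1 ≤ N := h'
      simpa [ha, hb] using hedge t h'
    · have ht' : t = N := by omega
      subst ht'
      have : ¬ (t + 1 ≤ t) := by omega
      simpa [this, hN] using he

lemma crossing (σ : ℕ → ℕ) : ∀ n u k, min (σ u) (σ (u+n)) ≤ k →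
    k + 1 ≤ max (σ u) (σ (u+n)) → ∃ i, u ≤ i ∧ i < u + n ∧ HasEdge σ i k := by
  intro n
  induction n with
  | zero =>
    intro u k h1 h2
    simp only [Nat.add_zero] at h1 h2
    omega
  | succ n ih =>
    intro u k h1 h2
    have h1 : min (σ u) (σ (u+n+1)) ≤ k := h1
    have h2 : k + 1 ≤ max (σ u) (σ (u+n+1)) := h2
    rcases le_or_gt (σ (u+n)) k with hc | hc <;> rcases le_or_gt (σ (u+n+1)) k with hd | hd
    · -- both ≤ k : σ u must be ≥ k+1, recurse
      obtain ⟨i, hi1, hi2, hi3⟩ := ih u k (by omega) (by omega)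
      exact ⟨i, hi1, by omega, hi3⟩
    · refine ⟨u+n, by omega, by omega, ?_⟩
      unfold HasEdge; omega
    · refine ⟨u+n, by omega, by omega, ?_⟩
      unfold HasEdge; omega
    · obtain ⟨i, hi1, hi2, hi3⟩ := ih u k (by omega) (by omega)
      exact ⟨i, hi1, by omega, hi3⟩

lemma crossing' (σ : ℕ → ℕ) (j0 j1 k : ℕ) (h0 : σ j0 ≤ k) (h1 : k + 1 ≤ σ j1) :
    ∃ i, min j0 j1 ≤ i ∧ i < max j0 j1 ∧ HasEdge σ i k := by
  rcases le_total j0 j1 with h | h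
  · obtain ⟨i, hi1, hi2, hi3⟩ := crossing σ (j1 - j0) j0 k
      (by rw [show j0 + (j1 - j0) = j1 from by omega]; omega)
      (by rw [show j0 + (j1 - j0) = j1 from by omega]; omega)
    exact ⟨i, by omega, by omega, hi3⟩
  · obtain ⟨i, hi1, hi2, hi3⟩ := crossing σ (j0 - j1) j1 k
      (by rw [show j1 + (j0 - j1) = j0 from by omega]; omega)
      (by rw [show j1 + (j0 - j1) = j0 from by omega]; omega)
    exact ⟨i, by omega, by omega, hi3⟩

section OrbitLemmas

variable {f : ℝ → ℝ} {m : ℕ} {β : ℕ → ℝ} {σ : ℕ → ℕ}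

lemma orbit_maps (horb : IsOrbitWithPerm f m β σ) {t : ℕ} (ht : t ∈ Set.Icc 1 m) :
    σ t ∈ Set.Icc 1 m := horb.2.2.1.mapsTo ht

lemma orbit_iter_mem (horb : IsOrbitWithPerm f m β σ) (j : ℕ) {t : ℕ}
    (ht : t ∈ Set.Icc 1 m) : σ^[j] t ∈ Set.Icc 1 m := by
  induction j with
  | zero => exact ht
  | succ j ih => rw [Function.iterate_succ_apply']; exact orbit_maps horb ih

lemma orbit_iter_eq (horb : IsOrbitWithPerm f m β σ) :
    ∀ j t, t ∈ Set.Icc 1 m → f^[j] (β t) = β (σ^[j] t) := by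
  intro j
  induction j with
  | zero => intro t _; simp
  | succ j ih =>
    intro t ht
    rw [Function.iterate_succ_apply, Function.iterate_succ_apply,
      horb.2.2.2 t ht]
    exact ih (σ t) (orbit_maps horb ht)

lemma orbit_iter_ne (horb : IsOrbitWithPerm f m β σ) {j t : ℕ}
    (ht : t ∈ Set.Icc 1 m) (hj1 : 1 ≤ j) (hjm : j < m) : σ^[j] t ≠ t := by
  intro h
  exact (horb.2.1 t ht).2 j hj1 hjm (by rw [orbit_iter_eq horb j t ht, h])

lemma orbit_ne (horb : IsOrbitWithPerm f m β σ) (hm : 1 < m) {t : ℕ}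
    (ht : t ∈ Set.Icc 1 m) : σ t ≠ t := by
  have := orbit_iter_ne horb ht (le_refl 1) hm
  rwa [Function.iterate_one] at this

lemma orbit_cancel (horb : IsOrbitWithPerm f m β σ) :
    ∀ j x y, x ∈ Set.Icc 1 m → y ∈ Set.Icc 1 m → σ^[j] x = σ^[j] y → x = y := by
  intro j
  induction j with
  | zero => intro x y _ _ h; exact h
  | succ j ih =>
    intro x y hx hy h
    rw [Function.iterate_succ_apply, Function.iterate_succ_apply] at h
    exact horb.2.2.1.injOn hx hy (ih _ _ (orbit_maps horb hx) (orbit_maps horb hy) h)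

lemma invariant_full (horb : IsOrbitWithPerm f m β σ) (hm : 2 < m) {a b t : ℕ}
    (ht : t ∈ Set.Icc 1 m) (hat : a ≤ t) (htb : t ≤ b + 1) (ha : 1 ≤ a)
    (hb : b + 1 ≤ m)
    (hinv : ∀ i, a ≤ i → i ≤ b + 1 → a ≤ σ i ∧ σ i ≤ b + 1) :
    a = 1 ∧ b = m - 1 := by
  have hmem : ∀ j, a ≤ σ^[j] t ∧ σ^[j] t ≤ b + 1 := by
    intro j
    induction j with
    | zero => exact ⟨hat, htb⟩
    | succ j ih =>
      rw [Function.iterate_succ_apply']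
      exact hinv _ ih.1 ih.2
  have key : ∀ j k, j < k → k < m → σ^[j] t ≠ σ^[k] t := by
    intro j k hjk hkm heq
    have h1 : σ^[k] t = σ^[j] (σ^[k-j] t) := by
      rw [← Function.iterate_add_apply]
      congr 1
      omega
    have h2 : σ^[k-j] t = t := by
      apply orbit_cancel horb j _ _ (orbit_iter_mem horb _ ht) ht
      rw [← h1]
      exact heq.symm
    exact orbit_iter_ne horb ht (by omega) (by omega) h2
  have hinj : Set.InjOn (fun j => σ^[j] t) ↑(Finset.range m) := by
    intro j hj k hk heq
    simp only [Finset.coe_range, Set.mem_Iio] at hj hk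
    rcases lt_trichotomy j k with h | h | h
    · exact absurd heq (key j k h hk)
    · exact h
    · exact absurd heq.symm (key k j h hj)
  have hcard : ((Finset.range m).image (fun j => σ^[j] t)).card = m := by
    rw [Finset.card_image_of_injOn hinj, Finset.card_range]
  have hsub : ((Finset.range m).image (fun j => σ^[j] t)) ⊆ Finset.Icc a (b+1) := by
    intro x hx
    simp only [Finset.mem_image] at hx
    obtain ⟨j, _, rfl⟩ := hx
    exact Finset.mem_Icc.mpr ⟨(hmem j).1, (hmem j).2⟩
  have := Finset.card_le_card hsub
  rw [hcard, Nat.card_Icc] at this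
  omega

end OrbitLemmas

/-- From the loop vertex `J r*`, every vertex of the digraph of an `m`-orbit,
`m > 2`, is reachable by a directed path. -/
theorem digraph_path_from_loop (f : ℝ → ℝ) (hf : Continuous f) (m : ℕ)
    (hm : 2 < m) (β : ℕ → ℝ) (σ : ℕ → ℕ) (horb : IsOrbitWithPerm f m β σ)
    (rstar : ℕ) (h1 : rstar ∈ Set.Icc 1 m) (h2 : rstar < σ rstar)
    (h3 : ∀ i ∈ Set.Icc 1 m, i < σ i → i ≤ rstar) :
    ∀ r ∈ Set.Icc 1 (m-1),
      ∃ (N : ℕ) (s : ℕ → ℕ), s 0 = rstar ∧ s N = r ∧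
        (∀ t ≤ N, s t ∈ Set.Icc 1 (m-1)) ∧
        (∀ t < N, HasEdge σ (s t) (s (t+1))) := by
  have hr1 : 1 ≤ rstar := h1.1
  have hσr : σ rstar ≤ m := (orbit_maps horb h1).2
  have hrm : rstar ≤ m - 1 := by omega
  have hr1m : rstar + 1 ∈ Set.Icc 1 m := Set.mem_Icc.mpr ⟨by omega, by omega⟩
  have hσr1 : σ (rstar + 1) ≤ rstar := by
    have hne : σ (rstar + 1) ≠ rstar + 1 := orbit_ne horb (by omega) hr1m
    have h4 : ¬ (rstar + 1 < σ (rstar + 1)) := fun h => by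
      have := h3 _ hr1m h; omega
    omega
  have grow : ∀ μ a b, 1 ≤ a → a ≤ rstar → rstar ≤ b → b ≤ m - 1 →
      a - 1 + (m - 1 - b) ≤ μ →
      (∀ k, a ≤ k → k ≤ b → Reach σ m rstar k) →
      ∀ r, 1 ≤ r → r ≤ m - 1 → Reach σ m rstar r := by
    intro μ
    induction μ with
    | zero =>
      intro a b ha har hrb hbm hμ hK r h1r hrm1
      exact hK r (by omega) (by omega)
    | succ μ ih =>
      intro a b ha har hrb hbm hμ hK r h1r hrm1
      by_cases hesc : ∀ i, a ≤ i → i ≤ b + 1 → a ≤ σ i ∧ σ i ≤ b + 1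
      · obtain ⟨ha1, hb1⟩ := invariant_full horb hm h1 har (by omega) ha (by omega) hesc
        exact hK r (by omega) (by omega)
      · push_neg at hesc
        obtain ⟨i, hia, hib, hbad⟩ := hesc
        have him : i ∈ Set.Icc 1 m := Set.mem_Icc.mpr ⟨by omega, by omega⟩
        have hσi1 : 1 ≤ σ i := (orbit_maps horb him).1
        have hσim : σ i ≤ m := (orbit_maps horb him).2
        rcases lt_or_ge (σ i) a with hlt | hge
        · -- extend left to σ i
          have hK' : ∀ k, σ i ≤ k → k ≤ b → Reach σ m rstar k := by
            intro k hk1 hk2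
            rcases le_or_gt a k with h' | h'
            · exact hK k h' hk2
            · obtain ⟨j, hj1, hj2, hj3⟩ := crossing' σ i rstar k hk1 (by omega)
              exact reach_step (hK j (by omega) (by omega))
                (Set.mem_Icc.mpr ⟨by omega, by omega⟩) hj3
          exact ih (σ i) b (by omega) (by omega) hrb hbm (by omega) hK' r h1r hrm1
        · have hgt : b + 1 < σ i := hbad hge
          have hK' : ∀ k, a ≤ k → k ≤ σ i - 1 → Reach σ m rstar k := by
            intro k hk1 hk2
            rcases le_or_gt k b with h' | h'
            · exact hK k hk1 h'
            · obtain ⟨j, hj1, hj2, hj3⟩ := crossing' σ (rstar+1) i k (by omega) (by omega)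
              exact reach_step (hK j (by omega) (by omega))
                (Set.mem_Icc.mpr ⟨by omega, by omega⟩) hj3
          exact ih a (σ i - 1) ha har (by omega) (by omega) (by omega) hK' r h1r hrm1
  intro r hr
  rw [Set.mem_Icc] at hr
  exact grow m rstar rstar hr1 le_rfl le_rfl hrm (by omega)
    (fun k hk1 hk2 => by
      have hk : k = rstar := by omega
      rw [hk]
      exact reach_self σ m rstar (Set.mem_Icc.mpr ⟨hr1, hrm⟩))
    r hr.1 hr.2
end

section
/- (Straffin's lemma) Let f : ℝ → ℝ be continuous with an n-orbit B = {β₁ < ⋯ < β_n}, n > 1. Suppose r_0, r_1, …, r_{m−1} is a primitive cycle of length m in the digraph of B. Then f has a periodic point y of period m such that f^[t](y) ∈ [β_{r_t}, β_{r_t + 1}] for all 0 ≤ t < m. -/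
/-- `r 0, r 1, …, r (ℓ−1)` is a cycle of length `ℓ` in the digraph of an
`n`-orbit with permutation `σ`. -/
def IsCycle (σ : ℕ → ℕ) (n ℓ : ℕ) (r : ℕ → ℕ) : Prop :=
  1 ≤ ℓ ∧ (∀ t < ℓ, r t ∈ Set.Icc 1 (n-1)) ∧
  (∀ t, t + 1 < ℓ → HasEdge σ (r t) (r (t+1))) ∧
  HasEdge σ (r (ℓ-1)) (r 0)

/-- A cycle is primitive if it is not a shorter cycle repeated several times. -/
def IsPrimitiveCycle (σ : ℕ → ℕ) (n ℓ : ℕ) (r : ℕ → ℕ) : Prop :=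
  IsCycle σ n ℓ r ∧
  ¬ ∃ d, d ∣ ℓ ∧ 0 < d ∧ d < ℓ ∧ ∀ t < ℓ, r t = r (t % d)

lemma coverA {f : ℝ → ℝ} (hf : Continuous f) {a b u v : ℝ} (hab : a ≤ b) (huv : u ≤ v)
    (h1 : f a ≤ u) (h2 : v ≤ f b) :
    ∃ u' v', a ≤ u' ∧ u' ≤ v' ∧ v' ≤ b ∧ f u' = u ∧ f v' = v ∧
      ∀ x ∈ Set.Icc u' v', f x ∈ Set.Icc u v := by
  have hfc : ContinuousOn f (Set.Icc a b) := hf.continuousOn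
  -- set of points mapping to v
  set S : Set ℝ := Set.Icc a b ∩ f ⁻¹' {v} with hS
  have hSclosed : IsClosed S := isClosed_Icc.inter (isClosed_singleton.preimage hf)
  have hSne : S.Nonempty := by
    have : v ∈ Set.Icc (f a) (f b) := ⟨le_trans h1 huv, h2⟩
    obtain ⟨x, hx, hfx⟩ := intermediate_value_Icc hab hfc this
    exact ⟨x, hx, hfx⟩
  have hSbdd : BddBelow S := ⟨a, fun x hx => hx.1.1⟩
  set b' := sInf S with hb'
  have hb'S : b' ∈ S := hSclosed.csInf_mem hSne hSbdd
  have hab' : a ≤ b' := hb'S.1.1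
  have hb'b : b' ≤ b := hb'S.1.2
  have hfb' : f b' = v := hb'S.2
  -- set of points in [a, b'] mapping to u
  set T : Set ℝ := Set.Icc a b' ∩ f ⁻¹' {u} with hT
  have hTclosed : IsClosed T := isClosed_Icc.inter (isClosed_singleton.preimage hf)
  have hTne : T.Nonempty := by
    have : u ∈ Set.Icc (f a) (f b') := ⟨h1, by rw [hfb']; exact huv⟩
    obtain ⟨x, hx, hfx⟩ := intermediate_value_Icc hab' (hf.continuousOn) this
    exact ⟨x, hx, hfx⟩
  have hTbdd : BddAbove T := ⟨b', fun x hx => hx.1.2⟩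
  set a' := sSup T with ha'
  have ha'T : a' ∈ T := hTclosed.csSup_mem hTne hTbdd
  have haa' : a ≤ a' := ha'T.1.1
  have ha'b' : a' ≤ b' := ha'T.1.2
  have hfa' : f a' = u := ha'T.2
  refine ⟨a', b', haa', ha'b', hb'b, hfa', hfb', ?_⟩
  rintro x ⟨hx1, hx2⟩
  constructor
  · by_contra h
    push_neg at h
    -- f x < u, find z ∈ [x, b'] with f z = u, z > a'
    have hxa' : a' < x := by
      rcases lt_or_eq_of_le hx1 with h' | h'
      · exact h'
      · exfalso; rw [← h', hfa'] at h; exact lt_irrefl u h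
    have : u ∈ Set.Icc (f x) (f b') := ⟨le_of_lt h, by rw [hfb']; exact huv⟩
    obtain ⟨z, hz, hfz⟩ := intermediate_value_Icc hx2 hf.continuousOn this
    have hzT : z ∈ T := ⟨⟨le_trans haa' (le_trans (le_of_lt hxa') hz.1), hz.2⟩, hfz⟩
    have : z ≤ a' := le_csSup hTbdd hzT
    have : x ≤ a' := le_trans hz.1 this
    exact absurd this (not_le.mpr hxa')
  · by_contra h
    push_neg at h
    -- f x > v, find z ∈ [a', x] with f z = v, z < b'
    have hxb' : x < b' := by
      rcases lt_or_eq_of_le hx2 with h' | h'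
      · exact h'
      · exfalso; rw [h', hfb'] at h; exact lt_irrefl v h
    have : v ∈ Set.Icc (f a') (f x) := ⟨by rw [hfa']; exact huv, le_of_lt h⟩
    obtain ⟨z, hz, hfz⟩ := intermediate_value_Icc hx1 hf.continuousOn this
    have hzS : z ∈ S := ⟨⟨le_trans haa' hz.1, le_trans hz.2 (le_trans (le_of_lt hxb') hb'b)⟩, hfz⟩
    have : b' ≤ z := csInf_le hSbdd hzS
    have : b' ≤ x := le_trans this hz.2
    exact absurd this (not_le.mpr hxb')

lemma coverB {f : ℝ → ℝ} (hf : Continuous f) {a b u v : ℝ} (hab : a ≤ b) (huv : u ≤ v)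
    (h1 : min (f a) (f b) ≤ u) (h2 : v ≤ max (f a) (f b)) :
    ∃ u' v', a ≤ u' ∧ u' ≤ v' ∧ v' ≤ b ∧
      ((f u' = u ∧ f v' = v) ∨ (f u' = v ∧ f v' = u)) ∧
      ∀ x ∈ Set.Icc u' v', f x ∈ Set.Icc u v := by
  rcases le_total (f a) (f b) with hor | hor
  · rw [min_eq_left hor] at h1; rw [max_eq_right hor] at h2
    obtain ⟨u', v', g1, g2, g3, g4, g5, g6⟩ := coverA hf hab huv h1 h2
    exact ⟨u', v', g1, g2, g3, Or.inl ⟨g4, g5⟩, g6⟩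
  · rw [min_eq_right hor] at h1; rw [max_eq_left hor] at h2
    have hg : Continuous (fun x => -(f x)) := hf.neg
    have k1 : (fun x => -(f x)) a ≤ -v := by simpa using h2
    have k2 : -u ≤ (fun x => -(f x)) b := by simpa using h1
    obtain ⟨u', v', g1, g2, g3, g4, g5, g6⟩ := coverA hg hab (neg_le_neg huv) k1 k2
    refine ⟨u', v', g1, g2, g3, Or.inr ⟨?_, ?_⟩, ?_⟩
    · have := g4; simpa [neg_eq_iff_eq_neg] using this
    · have := g5; simpa [neg_eq_iff_eq_neg] using this
    · intro x hx
      have := g6 x hx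
      simp only [Set.mem_Icc] at this ⊢
      constructor <;> linarith [this.1, this.2]

lemma edge_target_unique {σ : ℕ → ℕ} {n : ℕ} (hinj : Set.InjOn σ (Set.Icc 1 n))
    {ρ c s s' : ℕ} (hρ : ρ ∈ Set.Icc 1 (n-1)) (hc : c ∈ Set.Icc 1 n)
    (h1 : ρ ≤ c) (h2 : c ≤ ρ + 1)
    (hs : s ≤ σ c ∧ σ c ≤ s + 1) (hs' : s' ≤ σ c ∧ σ c ≤ s' + 1)
    (he : HasEdge σ ρ s) (he' : HasEdge σ ρ s') : s = s' := by
  simp only [Set.mem_Icc] at hρ hc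
  -- the other endpoint
  have hcase : c = ρ ∨ c = ρ + 1 := by omega
  set a := if c = ρ then ρ + 1 else ρ with ha
  have hane : a ≠ c := by rcases hcase with h | h <;> simp [ha, h] <;> omega
  have hamem : 1 ≤ a ∧ a ≤ n := by rcases hcase with h | h <;> simp [ha, h] <;> omega
  have hσane : σ a ≠ σ c := fun h =>
    hane (hinj (Set.mem_Icc.mpr ⟨hamem.1, hamem.2⟩) (Set.mem_Icc.mpr ⟨hc.1, hc.2⟩) h)
  have hpair : (σ ρ = σ c ∧ σ (ρ+1) = σ a) ∨ (σ ρ = σ a ∧ σ (ρ+1) = σ c) := by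
    rcases hcase with h | h
    · left; constructor
      · rw [h]
      · have : a = ρ + 1 := by simp [ha, h]
        rw [this]
    · right; constructor
      · have : a = ρ := by simp [ha]; omega
        rw [this]
      · rw [h]
  obtain ⟨e1, e2⟩ := he
  obtain ⟨e1', e2'⟩ := he'
  have hmin : min (σ ρ) (σ (ρ+1)) = min (σ c) (σ a) := by
    rcases hpair with ⟨p1, p2⟩ | ⟨p1, p2⟩ <;> rw [p1, p2]
    rw [min_comm]
  have hmax : max (σ ρ) (σ (ρ+1)) = max (σ c) (σ a) := by
    rcases hpair with ⟨p1, p2⟩ | ⟨p1, p2⟩ <;> rw [p1, p2]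
    rw [max_comm]
  rw [hmin] at e1 e1'
  rw [hmax] at e2 e2'
  rcases lt_or_gt_of_ne hσane with h | h
  · -- σ a < σ c : max = σ c, so s + 1 ≤ σ c, combined with σ c ≤ s + 1 : s + 1 = σ c
    rw [max_eq_left h.le] at e2 e2'
    omega
  · -- σ a > σ c : min = σ c ≤ s, with s ≤ σ c : s = σ c
    rw [min_eq_left h.le] at e1 e1'
    omega

lemma exists_fixed_itinerary {f : ℝ → ℝ} (hf : Continuous f) {n : ℕ} (hn : 1 < n)
    {β : ℕ → ℝ} {σ : ℕ → ℕ} (horb : IsOrbitWithPerm f n β σ)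
    {m : ℕ} {r : ℕ → ℕ} (hcyc : IsCycle σ n m r) :
    ∃ y, f^[m] y = y ∧ ∀ t < m, f^[t] y ∈ Set.Icc (β (r t)) (β (r t + 1)) := by
  obtain ⟨hβ, horbpt, hσbij, hfβ⟩ := horb
  obtain ⟨hm, hrmem, hedges, hwrap⟩ := hcyc
  set R : ℕ → ℕ := fun t => r (t % m) with hR
  have hRmem : ∀ t, R t ∈ Set.Icc 1 (n-1) := fun t => hrmem _ (Nat.mod_lt _ hm)
  have hRm : R m = r 0 := by simp [hR, Nat.mod_self]
  have hRlt : ∀ t < m, R t = r t := fun t ht => by simp [hR, Nat.mod_eq_of_lt ht]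
  have hedge : ∀ t < m, HasEdge σ (R t) (R (t+1)) := by
    intro t ht
    by_cases h : t + 1 < m
    · rw [hRlt t ht, hRlt (t+1) h]; exact hedges t h
    · have ht' : t = m - 1 := by omega
      have htm1 : t + 1 = m := by omega
      have h0 : (t + 1) % m = 0 := by rw [htm1]; exact Nat.mod_self m
      rw [hRlt t ht, hR]; simp only [h0]
      rw [ht']; exact hwrap
  have hmemIcc : ∀ i, i ∈ Set.Icc 1 (n-1) → i ∈ Set.Icc 1 n ∧ i + 1 ∈ Set.Icc 1 n := by
    intro i hi
    simp only [Set.mem_Icc] at hi ⊢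
    omega
  have hβm : MonotoneOn β (Set.Icc 1 n) := hβ.monotoneOn
  -- the inductive construction
  have hP : ∀ k, k ≤ m → ∃ u v : ℝ, u ≤ v ∧
      (∀ s ≤ k, ∀ x ∈ Set.Icc u v,
        f^[s] x ∈ Set.Icc (β (R (m - k + s))) (β (R (m - k + s) + 1))) ∧
      ((f^[k] u = β (r 0) ∧ f^[k] v = β (r 0 + 1)) ∨
       (f^[k] u = β (r 0 + 1) ∧ f^[k] v = β (r 0))) := by
    intro k
    induction k with
    | zero =>
      intro _
      have h0 : r 0 ∈ Set.Icc 1 (n-1) := hrmem 0 hm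
      obtain ⟨h1, h2⟩ := hmemIcc _ h0
      refine ⟨β (r 0), β (r 0 + 1), hβm h1 h2 (by omega), ?_, Or.inl ⟨rfl, rfl⟩⟩
      intro s hs x hx
      interval_cases s
      simpa [hRm] using hx
    | succ k ih =>
      intro hk1
      obtain ⟨u, v, huv, hcond, hdisj⟩ := ih (by omega)
      set t := m - (k+1) with ht
      have htm : t < m := by omega
      have htk : m - k = t + 1 := by omega
      set i := R t with hi
      have hiu : i ∈ Set.Icc 1 (n-1) := hRmem t
      obtain ⟨hi1, hi2⟩ := hmemIcc _ hiu
      have hfa : f (β i) = β (σ i) := hfβ _ hi1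
      have hfb : f (β (i+1)) = β (σ (i+1)) := hfβ _ hi2
      have hσi : σ i ∈ Set.Icc 1 n := hσbij.mapsTo hi1
      have hσi1 : σ (i+1) ∈ Set.Icc 1 n := hσbij.mapsTo hi2
      obtain ⟨he1, he2⟩ := hedge t htm
      have hRt1 := hRmem (t+1)
      obtain ⟨hj1, hj2⟩ := hmemIcc _ hRt1
      -- u, v lie in J_{R (t+1)}
      have hu0 : u ∈ Set.Icc (β (R (t+1))) (β (R (t+1) + 1)) := by
        have := hcond 0 (by omega) u (Set.left_mem_Icc.mpr huv)
        rwa [htk, Nat.add_zero, Function.iterate_zero_apply] at this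
      have hv0 : v ∈ Set.Icc (β (R (t+1))) (β (R (t+1) + 1)) := by
        have := hcond 0 (by omega) v (Set.right_mem_Icc.mpr huv)
        rwa [htk, Nat.add_zero, Function.iterate_zero_apply] at this
      have hminmem : min (σ i) (σ (i+1)) ∈ Set.Icc 1 n := by
        rcases le_total (σ i) (σ (i+1)) with h | h
        · rwa [min_eq_left h]
        · rwa [min_eq_right h]
      have hmaxmem : max (σ i) (σ (i+1)) ∈ Set.Icc 1 n := by
        rcases le_total (σ i) (σ (i+1)) with h | h
        · rwa [max_eq_right h]
        · rwa [max_eq_left h]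
      have h1 : min (f (β i)) (f (β (i+1))) ≤ u := by
        rw [hfa, hfb]
        have hmin : min (β (σ i)) (β (σ (i+1))) = β (min (σ i) (σ (i+1))) := by
          rcases le_total (σ i) (σ (i+1)) with h | h
          · rw [min_eq_left (hβm hσi hσi1 h), min_eq_left h]
          · rw [min_eq_right (hβm hσi1 hσi h), min_eq_right h]
        rw [hmin]
        exact le_trans (hβm hminmem hj1 he1) hu0.1
      have h2 : v ≤ max (f (β i)) (f (β (i+1))) := by
        rw [hfa, hfb]
        have hmax : max (β (σ i)) (β (σ (i+1))) = β (max (σ i) (σ (i+1))) := by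
          rcases le_total (σ i) (σ (i+1)) with h | h
          · rw [max_eq_right (hβm hσi hσi1 h), max_eq_right h]
          · rw [max_eq_left (hβm hσi1 hσi h), max_eq_left h]
        rw [hmax]
        exact le_trans hv0.2 (hβm hj2 hmaxmem he2)
      have hab : β i ≤ β (i+1) := hβm hi1 hi2 (by omega)
      obtain ⟨u', v', g1, g2, g3, g4, g5⟩ := coverB hf hab huv h1 h2
      refine ⟨u', v', g2, ?_, ?_⟩
      · intro s hs x hx
        match s with
        | 0 =>
          simp only [Nat.add_zero, Function.iterate_zero_apply, Set.mem_Icc]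
          exact ⟨le_trans g1 hx.1, le_trans hx.2 g3⟩
        | s + 1 =>
          rw [Function.iterate_succ_apply]
          have hidx : m - (k+1) + (s+1) = m - k + s := by omega
          rw [hidx]
          exact hcond s (by omega) (f x) (g5 x hx)
      · rw [Function.iterate_succ_apply, Function.iterate_succ_apply]
        rcases g4 with ⟨e1, e2⟩ | ⟨e1, e2⟩ <;> rw [e1, e2] <;>
          rcases hdisj with ⟨d1, d2⟩ | ⟨d1, d2⟩
        · exact Or.inl ⟨d1, d2⟩
        · exact Or.inr ⟨d1, d2⟩
        · exact Or.inr ⟨d2, d1⟩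
        · exact Or.inl ⟨d2, d1⟩
  -- extract the fixed point
  obtain ⟨u, v, huv, hcond, hdisj⟩ := hP m le_rfl
  have hR0 : R 0 = r 0 := hRlt 0 hm
  have hu0 : β (r 0) ≤ u ∧ u ≤ β (r 0 + 1) := by
    have := hcond 0 (by omega) u (Set.left_mem_Icc.mpr huv)
    rw [Nat.sub_self, Nat.zero_add, Function.iterate_zero_apply, hR0] at this
    exact this
  have hv0 : β (r 0) ≤ v ∧ v ≤ β (r 0 + 1) := by
    have := hcond 0 (by omega) v (Set.right_mem_Icc.mpr huv)
    rw [Nat.sub_self, Nat.zero_add, Function.iterate_zero_apply, hR0] at this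
    exact this
  set g : ℝ → ℝ := fun x => f^[m] x - x with hg
  have hgc : ContinuousOn g (Set.Icc u v) := ((hf.iterate m).sub continuous_id).continuousOn
  have hyex : ∃ y ∈ Set.Icc u v, g y = 0 := by
    rcases hdisj with ⟨d1, d2⟩ | ⟨d1, d2⟩
    · have hgu : g u ≤ 0 := by simp only [hg]; rw [d1]; linarith [hu0.1]
      have hgv : 0 ≤ g v := by simp only [hg]; rw [d2]; linarith [hv0.2]
      obtain ⟨y, hy, hgy⟩ := intermediate_value_Icc huv hgc ⟨hgu, hgv⟩
      exact ⟨y, hy, hgy⟩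
    · have hgu : 0 ≤ g u := by simp only [hg]; rw [d1]; linarith [hu0.2]
      have hgv : g v ≤ 0 := by simp only [hg]; rw [d2]; linarith [hv0.1]
      obtain ⟨y, hy, hgy⟩ := intermediate_value_Icc' huv hgc ⟨hgv, hgu⟩
      exact ⟨y, hy, hgy⟩
  obtain ⟨y, hy, hgy⟩ := hyex
  refine ⟨y, ?_, ?_⟩
  · have : f^[m] y - y = 0 := hgy
    linarith
  · intro s hs
    have := hcond s (le_of_lt hs) y hy
    rwa [Nat.sub_self, Nat.zero_add, hRlt s hs] at this

/-- Straffin's lemma: a primitive cycle of length `m` in the digraph of an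
`n`-orbit yields a periodic point of period `m` following the cycle. -/
theorem straffin (f : ℝ → ℝ) (hf : Continuous f) (n : ℕ) (hn : 1 < n)
    (β : ℕ → ℝ) (σ : ℕ → ℕ) (horb : IsOrbitWithPerm f n β σ)
    (m : ℕ) (r : ℕ → ℕ) (hcyc : IsPrimitiveCycle σ n m r) :
    ∃ y, PeriodicPtOfPeriod f m y ∧
      ∀ t < m, f^[t] y ∈ Set.Icc (β (r t)) (β (r t + 1)) := by
  obtain ⟨hcycle, hprim⟩ := hcyc
  obtain ⟨y, hym, hit⟩ := exists_fixed_itinerary hf hn horb hcycle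
  refine ⟨y, ⟨hym, ?_⟩, hit⟩
  by_contra hcon
  push_neg at hcon
  obtain ⟨j, hj1, hj2, hjy⟩ := hcon
  obtain ⟨hβ, horbpt, hσbij, hfβ⟩ := horb
  obtain ⟨hm, hrmem, hedges, hwrap⟩ := hcycle
  have hβm : MonotoneOn β (Set.Icc 1 n) := hβ.monotoneOn
  -- the minimal period d of y
  set d := Function.minimalPeriod f y with hd
  have hymp : Function.IsPeriodicPt f m y := hym
  have hjp : Function.IsPeriodicPt f j y := hjy
  have hdm : d ∣ m := hymp.minimalPeriod_dvd
  have hdj : d ∣ j := hjp.minimalPeriod_dvd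
  have hdpos : 0 < d := hjp.minimalPeriod_pos (by omega)
  have hdlt : d < m := lt_of_le_of_lt (Nat.le_of_dvd (by omega) hdj) hj2
  have hfd : f^[d] y = y := Function.iterate_minimalPeriod
  have hdmle : d ≤ m := le_of_lt hdlt
  -- mod-d periodicity of the orbit of y
  have hfdp : Function.IsPeriodicPt f d y := hfd
  have hmuld : ∀ q, f^[d * q] y = y := fun q => hfdp.mul_const q
  have hmod : ∀ t, f^[t] y = f^[t % d] y := by
    intro t
    conv_lhs => rw [← Nat.mod_add_div t d]
    rw [Function.iterate_add_apply, hmuld]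
  -- extended itinerary
  set R : ℕ → ℕ := fun t => r (t % m) with hR
  have hRmem : ∀ t, R t ∈ Set.Icc 1 (n-1) := fun t => hrmem _ (Nat.mod_lt _ hm)
  have hmodm : ∀ t, f^[t] y = f^[t % m] y := by
    intro t
    conv_lhs => rw [← Nat.mod_add_div t m]
    rw [Function.iterate_add_apply, (hymp.mul_const _ : f^[m * (t/m)] y = y)]
  have hit' : ∀ t, f^[t] y ∈ Set.Icc (β (R t)) (β (R t + 1)) := by
    intro t
    rw [hmodm t]
    exact hit _ (Nat.mod_lt _ hm)
  have hsuccmod : ∀ t, (t + 1) % m = (t % m + 1) % m := by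
    intro t
    conv_lhs => rw [← Nat.mod_add_div t m]
    rw [Nat.add_right_comm, Nat.add_mul_mod_self_left]
  have hedge : ∀ t, HasEdge σ (R t) (R (t+1)) := by
    intro t
    have h1 : t % m < m := Nat.mod_lt _ hm
    show HasEdge σ (r (t % m)) (r ((t+1) % m))
    rw [hsuccmod t]
    by_cases h : t % m + 1 < m
    · rw [Nat.mod_eq_of_lt h]
      exact hedges _ h
    · have h2 : t % m + 1 = m := by omega
      have h3 : t % m = m - 1 := by omega
      rw [h2, Nat.mod_self, h3]
      exact hwrap
  -- a witness where r differs from its d-periodization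
  have hw : ∃ t1, t1 < m ∧ r t1 ≠ r (t1 % d) := by
    by_contra hcon2
    push_neg at hcon2
    exact hprim ⟨d, hdm, hdpos, hdlt, hcon2⟩
  obtain ⟨t1, ht1, hne⟩ := hw
  have ht2 : t1 % d < m := lt_of_lt_of_le (Nat.mod_lt _ hdpos) hdmle
  -- the common point of two distinct intervals is an orbit point
  have hz1 : f^[t1 % d] y ∈ Set.Icc (β (r t1)) (β (r t1 + 1)) := by
    rw [← hmod t1]; exact hit t1 ht1
  have hz2 : f^[t1 % d] y ∈ Set.Icc (β (r (t1 % d))) (β (r (t1 % d) + 1)) := hit _ ht2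
  have hk : ∃ k ∈ Set.Icc 1 n, f^[t1 % d] y = β k := by
    set z := f^[t1 % d] y
    have hi1 := hrmem t1 ht1
    have hi2 := hrmem _ ht2
    simp only [Set.mem_Icc] at hi1 hi2
    rcases lt_or_gt_of_ne hne with h | h
    · -- r t1 < r (t1 % d) : z = β (r (t1 % d))
      refine ⟨r (t1 % d), Set.mem_Icc.mpr ⟨hi2.1, by omega⟩, ?_⟩
      have hle1 : β (r t1 + 1) ≤ β (r (t1 % d)) :=
        hβm (Set.mem_Icc.mpr ⟨by omega, by omega⟩) (Set.mem_Icc.mpr ⟨by omega, by omega⟩) (by omega)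
      exact le_antisymm (le_trans hz1.2 hle1) hz2.1
    · refine ⟨r t1, Set.mem_Icc.mpr ⟨hi1.1, by omega⟩, ?_⟩
      have hle1 : β (r (t1 % d) + 1) ≤ β (r t1) :=
        hβm (Set.mem_Icc.mpr ⟨by omega, by omega⟩) (Set.mem_Icc.mpr ⟨by omega, by omega⟩) (by omega)
      exact le_antisymm (le_trans hz2.2 hle1) hz1.1
  obtain ⟨k, hkmem, hzk⟩ := hk
  -- iterates of orbit points stay in the orbit
  have horbit : ∀ u, ∀ k' ∈ Set.Icc 1 n, ∃ k'' ∈ Set.Icc 1 n, f^[u] (β k') = β k'' := by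
    intro u
    induction u with
    | zero => exact fun k' hk' => ⟨k', hk', rfl⟩
    | succ u ih =>
      intro k' hk'
      obtain ⟨k'', hk'', he⟩ := ih (σ k') (hσbij.mapsTo hk')
      exact ⟨k'', hk'', by rw [Function.iterate_succ_apply, hfβ k' hk', he]⟩
  -- y itself is an orbit point
  have hy0 : ∃ k0 ∈ Set.Icc 1 n, y = β k0 := by
    obtain ⟨k0, hk0, he⟩ := horbit (m - t1 % d) k hkmem
    refine ⟨k0, hk0, ?_⟩
    rw [← he, ← hzk, ← Function.iterate_add_apply]
    have hmm : m - t1 % d + t1 % d = m := by omega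
    rw [hmm, hym]
  obtain ⟨k0, hk0, hyk0⟩ := hy0
  have hexact := horbpt k0 hk0
  -- d = n
  have hdn : d = n := by
    have hny : f^[n] y = y := by rw [hyk0]; exact hexact.1
    have h1 : d ∣ n := Function.IsPeriodicPt.minimalPeriod_dvd hny
    have h2 : d ≤ n := Nat.le_of_dvd (by omega) h1
    by_contra hne'
    have hlt : d < n := lt_of_le_of_ne h2 hne'
    exact hexact.2 d hdpos hlt (by rw [← hyk0]; exact hfd)
  have hyexact : ∀ j', 1 ≤ j' → j' < d → f^[j'] y ≠ y := by
    intro j' h1 h2 hh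
    rw [hdn] at h2
    exact hexact.2 j' h1 h2 (by rw [← hyk0]; exact hh)
  -- the symbolic itinerary c
  set c : ℕ → ℕ := fun s => σ^[s] k0 with hc
  have hcsucc : ∀ s, c (s+1) = σ (c s) := fun s => Function.iterate_succ_apply' σ s k0
  have hcprop : ∀ s, c s ∈ Set.Icc 1 n ∧ f^[s] y = β (c s) := by
    intro s
    induction s with
    | zero =>
      refine ⟨?_, ?_⟩
      · show σ^[0] k0 ∈ _; simpa using hk0
      · show f^[0] y = β (σ^[0] k0); simpa using hyk0
    | succ s ih =>
      refine ⟨?_, ?_⟩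
      · rw [hcsucc]; exact hσbij.mapsTo ih.1
      · rw [Function.iterate_succ_apply', ih.2, hfβ _ ih.1, hcsucc]
  have hβinj : Set.InjOn β (Set.Icc 1 n) := hβ.injOn
  have hceq : ∀ s s', f^[s] y = f^[s'] y → c s = c s' := by
    intro s s' hss
    exact hβinj (hcprop s).1 (hcprop s').1 (by rw [← (hcprop s).2, ← (hcprop s').2, hss])
  have hcper : ∀ s, c (s + d) = c s :=
    fun s => hceq _ _ (by rw [Function.iterate_add_apply, hfd])
  -- R t is adjacent to c t
  have hRc : ∀ t, R t ≤ c t ∧ c t ≤ R t + 1 := by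
    intro t
    have h1 := hit' t
    rw [(hcprop t).2] at h1
    have hmem1 := hRmem t
    simp only [Set.mem_Icc] at hmem1
    have hct := (hcprop t).1
    constructor
    · exact (hβ.le_iff_le (Set.mem_Icc.mpr ⟨by omega, by omega⟩) hct).mp h1.1
    · exact (hβ.le_iff_le hct (Set.mem_Icc.mpr ⟨by omega, by omega⟩)).mp h1.2
  -- some time t0 < d with c t0 = 1
  have haux : ∀ s s', s < s' → s' < d → c s ≠ c s' := by
    intro s s' h1 h2 hss
    have hiter : f^[s'] y = f^[s] y := by rw [(hcprop s).2, (hcprop s').2, hss]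
    have e0 : f^[d - s'] (f^[s'] y) = y := by
      rw [← Function.iterate_add_apply]
      rw [show d - s' + s' = d by omega, hfd]
    rw [hiter, ← Function.iterate_add_apply] at e0
    exact hyexact (d - s' + s) (by omega) (by omega) e0
  have ht0ex : ∃ t0, t0 < d ∧ c t0 = 1 := by
    have hinjc : Set.InjOn c (Finset.range d : Set ℕ) := by
      intro s hs s' hs' hss
      simp only [Finset.coe_range, Set.mem_Iio] at hs hs'
      rcases Nat.lt_trichotomy s s' with h | h | h
      · exact absurd hss (haux s s' h hs')
      · exact h
      · exact absurd hss.symm (haux s' s h hs)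
    have hcard : ((Finset.range d).image c).card = d := by
      rw [Finset.card_image_of_injOn hinjc]
      simp
    have hsub : (Finset.range d).image c ⊆ Finset.Icc 1 n := by
      intro x hx
      simp only [Finset.mem_image, Finset.mem_range] at hx
      obtain ⟨s, _, rfl⟩ := hx
      have := (hcprop s).1
      simp only [Set.mem_Icc] at this
      exact Finset.mem_Icc.mpr this
    have hEq : (Finset.range d).image c = Finset.Icc 1 n := by
      apply Finset.eq_of_subset_of_card_le hsub
      rw [hcard, Nat.card_Icc]
      omega
    have h1mem : (1 : ℕ) ∈ Finset.Icc 1 n := Finset.mem_Icc.mpr ⟨le_refl 1, by omega⟩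
    rw [← hEq] at h1mem
    simp only [Finset.mem_image, Finset.mem_range] at h1mem
    obtain ⟨t0, ht0d, hct0⟩ := h1mem
    exact ⟨t0, ht0d, hct0⟩
  obtain ⟨t0, ht0d, hct0⟩ := ht0ex
  -- R is 1 at times where c is 1
  have hF : ∀ t, c t = 1 → R t = 1 := by
    intro t hct
    have h1 := (hRc t).1
    have h2 := hRmem t
    simp only [Set.mem_Icc] at h2
    omega
  -- determinism
  have hstep : ∀ t, R t = R (t + d) → R (t+1) = R (t + d + 1) := by
    intro t hRt
    have hct := (hcprop t).1
    have he1 := hedge t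
    have he2 := hedge (t + d)
    rw [← hRt] at he2
    have hσc : σ (c t) = c (t+1) := (hcsucc t).symm
    have hs1 : R (t+1) ≤ σ (c t) ∧ σ (c t) ≤ R (t+1) + 1 := by
      rw [hσc]; exact hRc (t+1)
    have hs2 : R (t+d+1) ≤ σ (c t) ∧ σ (c t) ≤ R (t+d+1) + 1 := by
      rw [hσc]
      have hh := hRc (t+d+1)
      have hcc : c (t+d+1) = c (t+1) := by
        rw [show t+d+1 = (t+1)+d by omega]; exact hcper (t+1)
      rw [hcc] at hh
      exact hh
    exact edge_target_unique hσbij.injOn (hRmem t) hct (hRc t).1 (hRc t).2 hs1 hs2 he1 he2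
  have hchain : ∀ u, R (t0 + u) = R (t0 + u + d) := by
    intro u
    induction u with
    | zero =>
      have h1 : R t0 = 1 := hF t0 hct0
      have h2 : R (t0 + d) = 1 := hF _ (by rw [hcper t0, hct0])
      rw [Nat.add_zero, h1, h2]
    | succ u ih =>
      have hh := hstep (t0 + u) ih
      convert hh using 2 <;> omega
  have hRper : ∀ t, R (t + m) = R t := by
    intro t
    show r ((t + m) % m) = r (t % m)
    rw [Nat.add_mod_right]
  have hall : ∀ t, R t = R (t + d) := by
    intro t
    by_cases h : t0 ≤ t
    · obtain ⟨u, rfl⟩ := Nat.exists_eq_add_of_le h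
      exact hchain u
    · have h1 : t0 ≤ t + m := by omega
      obtain ⟨u, hu⟩ := Nat.exists_eq_add_of_le h1
      rw [← hRper t, ← hRper (t + d), show t + d + m = t + m + d by omega, hu]
      exact hchain u
  have hRd : ∀ t, R t = R (t % d) := by
    intro t
    induction t using Nat.strong_induction_on with
    | _ t ih =>
      by_cases h : t < d
      · rw [Nat.mod_eq_of_lt h]
      · have h1 : t - d + d = t := by omega
        have h2 : t % d = (t - d) % d := by
          conv_lhs => rw [← h1]
          rw [Nat.add_mod_right]
        rw [h2, ← ih (t - d) (by omega), hall (t - d), h1]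
  -- contradiction with primitivity
  apply hprim
  refine ⟨d, hdm, hdpos, hdlt, ?_⟩
  intro t ht
  have e1 : r t = R t := by show r t = r (t % m); rw [Nat.mod_eq_of_lt ht]
  have e2 : R (t % d) = r (t % d) := by
    show r (t % d % m) = r (t % d)
    rw [Nat.mod_eq_of_lt (lt_of_lt_of_le (Nat.mod_lt _ hdpos) hdmle)]
  rw [e1, hRd t, e2]
end

section
/- Let k ≥ 4. Each of the following two permutations π of {1,…,2k+1} is realized by a second minimal (2k+1)-orbit of some continuous map f : ℝ → ℝ: (a) π agrees with the Stefan permutation π_S except π(2) = 2k, π(3) = 2k+1, π(2k−1) = 2, π(2k) = 3; (b) π agrees with π_S except π(2) = 2k−1, π(3) = 2k+1, π(4) = 2k. -/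
/-- A `(2k+1)`-orbit `β` of `f` is second minimal: `f` has a periodic point of
period `2k−1` with forward orbit in `[β 1, β (2k+1)]`, and no periodic point of
odd period `q` with `1 < q < 2k−1` whose forward orbit lies in `[β 1, β (2k+1)]`. -/
def SecondMinimalOrbit (f : ℝ → ℝ) (k : ℕ) (β : ℕ → ℝ) : Prop :=
  (∃ y, PeriodicPtOfPeriod f (2*k-1) y ∧
      ∀ j : ℕ, f^[j] y ∈ Set.Icc (β 1) (β (2*k+1))) ∧
  ∀ q, Odd q → 1 < q → q < 2*k-1 →
    ¬ ∃ y, PeriodicPtOfPeriod f q y ∧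
        ∀ j : ℕ, f^[j] y ∈ Set.Icc (β 1) (β (2*k+1))

/-- The Stefan permutation of `{1,…,2k+1}`. -/
def stefanPerm (k : ℕ) (t : ℕ) : ℕ :=
  if t = 1 then k+1 else if t ≤ k+1 then 2*k+3-t else 2*k+2-t

/-- The permutation `π` of `{1,…,2k+1}` is realized by a second minimal
`(2k+1)`-orbit of some continuous map. -/
def RealizedSM (k : ℕ) (π : ℕ → ℕ) : Prop :=
  ∃ f : ℝ → ℝ, ∃ β : ℕ → ℝ, Continuous f ∧
    IsOrbitWithPerm f (2*k+1) β π ∧ SecondMinimalOrbit f k β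

/-!
The map is the piecewise linear interpolation `f` of `π` on `[1, 2k + 1]`, so that the integers
`1, …, 2k + 1` form a `(2k + 1)`-orbit with permutation `π`. Any other periodic orbit in
`[1, 2k + 1]` misses the integers, so its itinerary through the intervals `[u, u + 1]` is a closed
walk in the Markov graph of `π`; conversely, by the intermediate value theorem every closed walk is
the itinerary of a periodic point. For both permutations the Markov graph is bipartite apart from a
loop at `k + 1`, on which `f` has slope `-2`; the loop can only be entered from `1`, which is at
least `2k - 3` steps away from `k + 1`. Hence an odd closed walk shorter than `2k - 1` runs around
the loop only, and its periodic point is the fixed point of `f`. The closed walk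
`1 → k + 1 → k + 1 → k → k + 2 → ⋯ → 3 → 2k → 1` of length `2k - 1` gives a periodic point whose
period divides `2k - 1`; a smaller, necessarily odd, period would confine its itinerary to the
loop, which this walk leaves.
-/

open Function Set

theorem minimalPeriod_eq_iff_of_pos {α : Type*} {f : α → α} {x : α} {n : ℕ} (hn : 0 < n) :
    minimalPeriod f x = n ↔ f^[n] x = x ∧ ∀ j, 1 ≤ j → j < n → f^[j] x ≠ x := by
  constructor
  · rintro rfl
    exact ⟨iterate_minimalPeriod, fun j hj hjn =>
      not_isPeriodicPt_of_pos_of_lt_minimalPeriod (by omega) hjn⟩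
  · rintro ⟨hper, hmin⟩
    have hpos := IsPeriodicPt.minimalPeriod_pos hn hper
    refine le_antisymm (IsPeriodicPt.minimalPeriod_le hn hper) (not_lt.1 fun hlt => ?_)
    exact hmin _ hpos hlt iterate_minimalPeriod

theorem minimalPeriod_eq_of_orbit {α : Type*} {f : α → α} {x : α} {n : ℕ} (hn : 0 < n)
    (o : ℕ → α) (ho : o 0 = x) (hstep : ∀ j < n, f (o j) = o (j + 1)) (hclosed : o n = x)
    (hne : ∀ j, 1 ≤ j → j < n → o j ≠ x) : minimalPeriod f x = n := by
  have hiter : ∀ j ≤ n, f^[j] x = o j := fun j hj => by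
    induction j with
    | zero => exact ho.symm
    | succ j ih => rw [iterate_succ_apply', ih (by omega), hstep j (by omega)]
  rw [minimalPeriod_eq_iff_of_pos hn, hiter n le_rfl]
  exact ⟨hclosed, fun j hj hjn => hiter j hjn.le ▸ hne j hj hjn⟩

theorem exists_Icc_image_eq_of_le {f : ℝ → ℝ} (hf : Continuous f) {x y c d : ℝ} (hxy : x ≤ y)
    (hcd : c ≤ d) (hx : f x = c) (hy : f y = d) :
    ∃ p q, x ≤ p ∧ p ≤ q ∧ q ≤ y ∧ f '' Icc p q = Icc c d := by
  -- `p` is the last preimage of `c` in `[x, y]`, `q` the first preimage of `d` after `p`.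
  set S := Icc x y ∩ f ⁻¹' {c}
  have hS : IsCompact S := isCompact_Icc.inter_right (isClosed_singleton.preimage hf)
  have hSne : S.Nonempty := ⟨x, ⟨le_rfl, hxy⟩, hx⟩
  set p := sSup S
  obtain ⟨⟨hxp, hpy⟩, hp⟩ : p ∈ S := hS.sSup_mem hSne
  set T := Icc p y ∩ f ⁻¹' {d}
  have hT : IsCompact T := isCompact_Icc.inter_right (isClosed_singleton.preimage hf)
  have hTne : T.Nonempty := ⟨y, ⟨hpy, le_rfl⟩, hy⟩
  set q := sInf T
  obtain ⟨⟨hpq, hqy⟩, hq⟩ : q ∈ T := hT.sInf_mem hTne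
  simp only [mem_preimage, mem_singleton_iff] at hp hq
  refine ⟨p, q, hxp, hpq, hqy, subset_antisymm ?_ ?_⟩
  · rintro _ ⟨z, ⟨hpz, hzq⟩, rfl⟩
    constructor
    · by_contra! hz
      obtain ⟨z', ⟨hzz', hz'q⟩, hz'⟩ :=
        intermediate_value_Icc hzq hf.continuousOn ⟨hz.le, hq ▸ hcd⟩
      have : z' ≤ p := le_csSup hS.bddAbove ⟨⟨by linarith, by linarith⟩, hz'⟩
      have : z = p := by linarith
      exact hz.ne (this ▸ hp)
    · by_contra! hz
      obtain ⟨z', ⟨hpz', hz'z⟩, hz'⟩ :=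
        intermediate_value_Icc hpz hf.continuousOn ⟨hp ▸ hcd, hz.le⟩
      have : q ≤ z' := csInf_le hT.bddBelow ⟨⟨hpz', by linarith⟩, hz'⟩
      have : z = q := by linarith
      exact hz.ne' (this ▸ hq)
  · rw [← hp, ← hq]
    exact intermediate_value_Icc hpq hf.continuousOn

theorem exists_Icc_subset_image_eq {f : ℝ → ℝ} (hf : Continuous f) {a b c d : ℝ} (hcd : c ≤ d)
    (hcover : Icc c d ⊆ f '' Icc a b) :
    ∃ a' b', a' ≤ b' ∧ Icc a' b' ⊆ Icc a b ∧ f '' Icc a' b' = Icc c d := by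
  obtain ⟨x, ⟨hax, hxb⟩, hx⟩ := hcover ⟨le_rfl, hcd⟩
  obtain ⟨y, ⟨hay, hyb⟩, hy⟩ := hcover ⟨hcd, le_rfl⟩
  rcases le_total x y with hxy | hyx
  · obtain ⟨p, q, hxp, hpq, hqy, himage⟩ := exists_Icc_image_eq_of_le hf hxy hcd hx hy
    exact ⟨p, q, hpq, Icc_subset_Icc (by linarith) (by linarith), himage⟩
  · have hneg : Continuous (f ∘ Neg.neg) := hf.comp continuous_neg
    obtain ⟨p, q, hxp, hpq, hqy, himage⟩ :=
      exists_Icc_image_eq_of_le hneg (neg_le_neg hyx) hcd (by simpa using hx) (by simpa using hy)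
    refine ⟨-q, -p, neg_le_neg hpq, Icc_subset_Icc (by linarith) (by linarith), ?_⟩
    rw [← himage, image_comp, image_neg_Icc]

theorem exists_Icc_mapsTo_iterate_of_covering {f : ℝ → ℝ} (hf : Continuous f) {a b : ℕ → ℝ}
    (hab : ∀ t, a t ≤ b t) {n : ℕ}
    (hcover : ∀ t < n, Icc (a (t + 1)) (b (t + 1)) ⊆ f '' Icc (a t) (b t)) :
    ∃ u v, u ≤ v ∧ (∀ t ≤ n, MapsTo f^[t] (Icc u v) (Icc (a t) (b t))) ∧
      f^[n] '' Icc u v = Icc (a n) (b n) := by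
  induction n with
  | zero =>
    refine ⟨a 0, b 0, hab 0, fun t ht => ?_, image_id _⟩
    obtain rfl : t = 0 := by omega
    exact mapsTo_id _
  | succ n ih =>
    obtain ⟨u, v, -, hmaps, himage⟩ := ih fun t ht => hcover t (by omega)
    have hstep : Icc (a (n + 1)) (b (n + 1)) ⊆ f^[n + 1] '' Icc u v := by
      rw [iterate_succ', image_comp, himage]
      exact hcover n n.lt_succ_self
    obtain ⟨u', v', huv', hsub, himage'⟩ :=
      exists_Icc_subset_image_eq (hf.iterate _) (hab _) hstep
    refine ⟨u', v', huv', fun t ht => ?_, himage'⟩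
    rcases Nat.lt_or_eq_of_le ht with ht | rfl
    · exact (hmaps t (Nat.lt_succ_iff.1 ht)).mono_left hsub
    · exact himage' ▸ mapsTo_image _ _

theorem exists_isPeriodicPt_of_covering_cycle {f : ℝ → ℝ} (hf : Continuous f) {a b : ℕ → ℝ}
    (hab : ∀ t, a t ≤ b t) {n : ℕ}
    (hcover : ∀ t < n, Icc (a (t + 1)) (b (t + 1)) ⊆ f '' Icc (a t) (b t))
    (ha : a n = a 0) (hb : b n = b 0) :
    ∃ x, IsPeriodicPt f n x ∧ ∀ t ≤ n, f^[t] x ∈ Icc (a t) (b t) := by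
  obtain ⟨u, v, huv, hmaps, himage⟩ := exists_Icc_mapsTo_iterate_of_covering hf hab hcover
  have hself : SurjOn f^[n] (Icc u v) (Icc u v) := by
    rw [SurjOn, himage, ha, hb]
    simpa using (hmaps 0 n.zero_le).image_subset
  obtain ⟨x, hx, hfix⟩ := exists_mem_Icc_isFixedPt_of_surjOn (hf.iterate n).continuousOn huv hself
  exact ⟨x, hfix, fun t ht => hmaps t ht hx⟩

/-- The piecewise linear map through the points `(i, π i)`, `1 ≤ i ≤ n`, constant outside
`[1, n]`; the factor `min (max x i) (i + 1) - i` is the length of `[i, i + 1] ∩ (-∞, x]`. -/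
noncomputable def linInterp (n : ℕ) (π : ℕ → ℕ) (x : ℝ) : ℝ :=
  π 1 + ∑ i ∈ Finset.Ico 1 n, ((π (i + 1) : ℝ) - π i) * (min (max x i) (i + 1) - i)

section LinInterp

variable {n : ℕ} {π : ℕ → ℕ}

theorem continuous_linInterp : Continuous (linInterp n π) := by
  unfold linInterp
  fun_prop

theorem linInterp_of_mem_Icc {j : ℕ} (hj : 1 ≤ j) (hjn : j < n) {x : ℝ}
    (hx : x ∈ Icc (j : ℝ) (j + 1)) :
    linInterp n π x = π j + ((π (j + 1) : ℝ) - π j) * (x - j) := by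
  obtain ⟨hjx, hxj⟩ := hx
  have hleft : ∑ i ∈ Finset.Ico 1 j, ((π (i + 1) : ℝ) - π i) * (min (max x i) (i + 1) - i) =
      π j - π 1 := by
    rw [← Finset.sum_Ico_sub (fun i => (π i : ℝ)) hj]
    refine Finset.sum_congr rfl fun i hi => ?_
    have hij : (i : ℝ) + 1 ≤ j := by exact_mod_cast (Finset.mem_Ico.1 hi).2
    rw [max_eq_left (by linarith), min_eq_right (by linarith)]
    ring
  have hright : ∑ i ∈ Finset.Ico (j + 1) n, ((π (i + 1) : ℝ) - π i) *
      (min (max x i) (i + 1) - i) = 0 := by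
    refine Finset.sum_eq_zero fun i hi => ?_
    have hji : (j : ℝ) + 1 ≤ i := by exact_mod_cast (Finset.mem_Ico.1 hi).1
    rw [max_eq_right (by linarith), min_eq_left (by linarith), sub_self, mul_zero]
  unfold linInterp
  rw [← Finset.sum_Ico_consecutive _ hj hjn.le, Finset.sum_eq_sum_Ico_succ_bot hjn, hleft, hright,
    max_eq_left hjx, min_eq_left hxj]
  ring

theorem linInterp_natCast {j : ℕ} (hj : 1 ≤ j) (hjn : j ≤ n) : linInterp n π j = π j := by
  rcases hjn.lt_or_eq with hjn | rfl
  · rw [linInterp_of_mem_Icc hj hjn ⟨le_rfl, by linarith⟩]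
    ring
  rcases hj.eq_or_lt with rfl | hj
  · simp [linInterp]
  have hcast : ((j - 1 : ℕ) : ℝ) + 1 = j := by rw [Nat.cast_sub hj.le]; ring
  rw [← hcast, linInterp_of_mem_Icc (by omega) (by omega) ⟨by linarith, le_rfl⟩,
    Nat.sub_add_cancel hj.le]
  ring

theorem linInterp_mem_uIcc {j : ℕ} (hj : 1 ≤ j) (hjn : j < n) {x : ℝ}
    (hx : x ∈ Icc (j : ℝ) (j + 1)) : linInterp n π x ∈ uIcc (π j : ℝ) (π (j + 1)) := by
  rw [linInterp_of_mem_Icc hj hjn hx]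
  have h0 : 0 ≤ x - j := by linarith [hx.1]
  have h1 : x - j ≤ 1 := by linarith [hx.2]
  rcases le_total (π j : ℝ) (π (j + 1)) with h | h
  · rw [uIcc_of_le h]
    constructor <;> nlinarith
  · rw [uIcc_of_ge h]
    constructor <;> nlinarith

theorem uIcc_subset_image_linInterp {j : ℕ} (hj : 1 ≤ j) (hjn : j < n) :
    uIcc (π j : ℝ) (π (j + 1)) ⊆ linInterp n π '' Icc (j : ℝ) (j + 1) := by
  have h := intermediate_value_uIcc (a := (j : ℝ)) (b := j + 1)
    (continuous_linInterp (n := n) (π := π)).continuousOn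
  have hsucc : linInterp n π (j + 1) = π (j + 1) := by
    exact_mod_cast linInterp_natCast (n := n) (π := π) (j := j + 1) (by omega) hjn
  rwa [uIcc_of_le (by linarith : (j : ℝ) ≤ j + 1), linInterp_natCast hj hjn.le, hsucc] at h

end LinInterp

theorem floor_mem_Ioo_of_ne_natCast {n : ℕ} {x : ℝ} (hx : x ∈ Icc (1 : ℝ) n)
    (hint : ∀ i ∈ Icc 1 n, x ≠ i) : ⌊x⌋₊ ∈ Ico 1 n ∧ x ∈ Ioo (⌊x⌋₊ : ℝ) (⌊x⌋₊ + 1) := by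
  have h1 : 1 ≤ ⌊x⌋₊ := Nat.le_floor (by simpa using hx.1)
  have hn : ⌊x⌋₊ ≤ n := Nat.floor_le_of_le hx.2
  have hfloor : (⌊x⌋₊ : ℝ) < x :=
    (Nat.floor_le (by linarith [hx.1])).lt_of_ne (hint _ ⟨h1, hn⟩).symm
  refine ⟨⟨h1, hn.lt_of_ne fun h => ?_⟩, hfloor, Nat.lt_floor_add_one x⟩
  rw [h] at hfloor
  exact hfloor.not_ge hx.2

/-- The Markov graph of `π`: an edge `u → v` when `linInterp n π` maps `[u, u + 1]` over
`[v, v + 1]`. -/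
def MarkovEdge (n : ℕ) (π : ℕ → ℕ) (u v : ℕ) : Prop :=
  1 ≤ u ∧ u < n ∧ min (π u) (π (u + 1)) ≤ v ∧ v < max (π u) (π (u + 1))

section MarkovEdge

variable {n : ℕ} {π : ℕ → ℕ}

theorem MarkovEdge.Icc_subset_image {u v : ℕ} (h : MarkovEdge n π u v) :
    Icc (v : ℝ) (v + 1) ⊆ linInterp n π '' Icc (u : ℝ) (u + 1) := by
  obtain ⟨hu, hun, hmin, hmax⟩ := h
  refine Subset.trans ?_ (uIcc_subset_image_linInterp hu hun)
  rw [← Icc_min_max, ← Nat.cast_min, ← Nat.cast_max]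
  exact Icc_subset_Icc (by exact_mod_cast hmin) (by exact_mod_cast hmax)

theorem markovEdge_of_mem_Ioo {u v : ℕ} (hu : 1 ≤ u) (hun : u < n) {x : ℝ}
    (hx : x ∈ Icc (u : ℝ) (u + 1)) (hfx : linInterp n π x ∈ Ioo (v : ℝ) (v + 1)) :
    MarkovEdge n π u v := by
  have h := linInterp_mem_uIcc (π := π) hu hun hx
  rw [← Icc_min_max, ← Nat.cast_min, ← Nat.cast_max] at h
  have hmin : ((min (π u) (π (u + 1)) : ℕ) : ℝ) < v + 1 := h.1.trans_lt hfx.2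
  have hmax : (v : ℝ) < (max (π u) (π (u + 1)) : ℕ) := hfx.1.trans_le h.2
  exact ⟨hu, hun, Nat.lt_succ_iff.1 (by exact_mod_cast hmin), by exact_mod_cast hmax⟩

theorem markovEdge_floor_iterate {y : ℝ}
    (horb : ∀ t, (linInterp n π)^[t] y ∈ Icc (1 : ℝ) n)
    (hint : ∀ t, ∀ i ∈ Icc 1 n, (linInterp n π)^[t] y ≠ i) (t : ℕ) :
    MarkovEdge n π ⌊(linInterp n π)^[t] y⌋₊ ⌊(linInterp n π)^[t + 1] y⌋₊ := by
  obtain ⟨⟨h1, hn⟩, hx⟩ := floor_mem_Ioo_of_ne_natCast (horb t) (hint t)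
  have hfx := (floor_mem_Ioo_of_ne_natCast (horb (t + 1)) (hint (t + 1))).2
  rw [iterate_succ_apply'] at hfx ⊢
  exact markovEdge_of_mem_Ioo h1 hn (Ioo_subset_Icc_self hx) hfx

end MarkovEdge

section Cycle

variable {n : ℕ} {π : ℕ → ℕ}

theorem surjOn_iterate_of_minimalPeriod (hmaps : MapsTo π (Icc 1 n) (Icc 1 n))
    (hcyc : minimalPeriod π 1 = n) : SurjOn (π^[·] 1) (Iio n) (Icc 1 n) := by
  have h := Finset.surjOn_of_injOn_of_card_le (s := Finset.range n) (t := Finset.Icc 1 n)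
    (fun j => π^[j] 1) (fun j hj => ?_) (by simpa [← hcyc] using iterate_injOn_Iio_minimalPeriod)
    (by simp)
  · simpa using h
  · simp only [Finset.coe_range, mem_Iio, Finset.coe_Icc] at hj ⊢
    exact hmaps.iterate j ⟨le_rfl, by omega⟩

theorem bijOn_of_minimalPeriod (hmaps : MapsTo π (Icc 1 n) (Icc 1 n))
    (hcyc : minimalPeriod π 1 = n) : BijOn π (Icc 1 n) (Icc 1 n) := by
  refine (finite_Icc 1 n).surjOn_iff_bijOn_of_mapsTo hmaps |>.1 fun t ht => ?_
  have hn : 1 ≤ n := ht.1.trans ht.2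
  obtain ⟨j, -, rfl⟩ := surjOn_iterate_of_minimalPeriod hmaps hcyc ht
  refine ⟨π^[j + n - 1] 1, hmaps.iterate _ ⟨le_rfl, hn⟩, ?_⟩
  rw [← iterate_succ_apply' π, Nat.succ_eq_add_one, Nat.sub_add_cancel (by omega),
    iterate_add_apply, ← hcyc, iterate_minimalPeriod]

theorem minimalPeriod_eq_of_mem_Icc (hmaps : MapsTo π (Icc 1 n) (Icc 1 n))
    (hcyc : minimalPeriod π 1 = n) {t : ℕ} (ht : t ∈ Icc 1 n) : minimalPeriod π t = n := by
  have hn : 0 < n := ht.1.trans ht.2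
  obtain ⟨j, -, rfl⟩ := surjOn_iterate_of_minimalPeriod hmaps hcyc ht
  rw [minimalPeriod_apply_iterate (minimalPeriod_pos_iff_mem_periodicPts.1 (hcyc ▸ hn)), hcyc]

theorem iterate_linInterp_natCast (hmaps : MapsTo π (Icc 1 n) (Icc 1 n)) {t : ℕ}
    (ht : t ∈ Icc 1 n) (j : ℕ) : (linInterp n π)^[j] t = (π^[j] t : ℕ) := by
  induction j with
  | zero => rfl
  | succ j ih =>
    have hj := hmaps.iterate j ht
    rw [iterate_succ_apply', ih, linInterp_natCast hj.1 hj.2, iterate_succ_apply']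

theorem minimalPeriod_linInterp_natCast (hmaps : MapsTo π (Icc 1 n) (Icc 1 n)) {t : ℕ}
    (ht : t ∈ Icc 1 n) : minimalPeriod (linInterp n π) t = minimalPeriod π t :=
  minimalPeriod_eq_minimalPeriod_iff.2 fun j => by
    simp only [IsPeriodicPt, IsFixedPt, iterate_linInterp_natCast hmaps ht, Nat.cast_inj]

theorem isOrbitWithPerm_linInterp (hmaps : MapsTo π (Icc 1 n) (Icc 1 n))
    (hcyc : minimalPeriod π 1 = n) : IsOrbitWithPerm (linInterp n π) n (fun t => (t : ℝ)) π := by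
  refine ⟨Nat.strictMono_cast.strictMonoOn _, fun t ht => ?_, bijOn_of_minimalPeriod hmaps hcyc,
    fun t ht => linInterp_natCast ht.1 ht.2⟩
  rw [PeriodicPtOfPeriod, ← minimalPeriod_eq_iff_of_pos (ht.1.trans ht.2),
    minimalPeriod_linInterp_natCast hmaps ht, minimalPeriod_eq_of_mem_Icc hmaps hcyc ht]

theorem iterate_linInterp_ne_natCast (hmaps : MapsTo π (Icc 1 n) (Icc 1 n))
    (hcyc : minimalPeriod π 1 = n) {q : ℕ} (hq : 0 < q) (hnq : ¬n ∣ q) {y : ℝ}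
    (hy : IsPeriodicPt (linInterp n π) q y) (t : ℕ) {i : ℕ} (hi : i ∈ Icc 1 n) :
    (linInterp n π)^[t] y ≠ i := by
  intro hyi
  have h := minimalPeriod_apply_iterate (mk_mem_periodicPts hq hy) t
  rw [hyi, minimalPeriod_linInterp_natCast hmaps hi, minimalPeriod_eq_of_mem_Icc hmaps hcyc hi] at h
  exact hnq (h ▸ hy.minimalPeriod_dvd)

end Cycle

section OddClosedWalk

variable {α : Type*} {R : α → α → Prop} {c : α} {W : ℕ → α}

theorem exists_loop_of_odd_closedWalk {side : α → Prop}
    (hbip : ∀ u v, R u v → (u = c ∧ v = c) ∨ (side u ↔ ¬side v))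
    (hW : ∀ t, R (W t) (W (t + 1))) {q : ℕ} (hq : Odd q) (hclosed : W q = W 0) :
    ∃ t < q, W t = c ∧ W (t + 1) = c := by
  by_contra! hno
  have halt : ∀ t ≤ q, (side (W t) ↔ (side (W 0) ↔ Even t)) := by
    intro t ht
    induction t with
    | zero => simp
    | succ t ih =>
      have hcross := (hbip _ _ (hW t)).resolve_left fun h => hno t (by omega) h.1 h.2
      rw [Nat.even_add_one]
      have := ih (by omega)
      tauto
  have := halt q le_rfl
  rw [hclosed, iff_false_intro (Nat.not_even_iff_odd.2 hq)] at this
  tauto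

theorem height_le_of_avoid {h : α → ℕ} (hheight : ∀ u v, R u v → v ≠ c → h v ≤ h u + 1)
    (hc : h c = 0) (hW : ∀ t, R (W t) (W (t + 1))) {s : ℕ} (hs : W s = c) :
    ∀ j, (∀ i, 0 < i → i ≤ j → W (s + i) ≠ c) → h (W (s + j)) ≤ j
  | 0, _ => by simp [hs, hc]
  | j + 1, havoid => by
    have := height_le_of_avoid hheight hc hW hs j fun i hi hij => havoid i hi (by omega)
    have := hheight _ _ (hW (s + j)) (havoid (j + 1) (by omega) le_rfl)
    rw [← add_assoc]
    omega

theorem eq_of_odd_periodic_walk {side : α → Prop} {h : α → ℕ} {a : α}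
    (hbip : ∀ u v, R u v → (u = c ∧ v = c) ∨ (side u ↔ ¬side v))
    (hheight : ∀ u v, R u v → v ≠ c → h v ≤ h u + 1) (hentry : ∀ u, R u c → u = a ∨ u = c)
    (hc : h c = 0) (hW : ∀ t, R (W t) (W (t + 1))) {q : ℕ} (hq : Odd q) (hper : Periodic W q)
    (hqa : q < h a + 2) (t : ℕ) : W t = c := by
  classical
  have hloop : ∀ s, ∃ u < q, W (s + u) = c ∧ W (s + u + 1) = c := fun s =>
    exists_loop_of_odd_closedWalk (W := fun i => W (s + i)) hbip (fun i => hW (s + i)) hq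
      (by simpa using hper s)
  by_contra hne
  -- the excursion away from `c` through time `t + q`, from its last visit `s` to its next one `r`
  have hne' : W (t + q) ≠ c := by rwa [hper t]
  obtain ⟨u₀, hu₀, hu₀c, -⟩ := hloop t
  set s := Nat.findGreatest (fun i => W i = c) (t + q)
  have hs : W s = c :=
    Nat.findGreatest_spec (P := fun i => W i = c) (show t + u₀ ≤ t + q by omega) hu₀c
  have hst : s < t + q := (Nat.findGreatest_le _).lt_of_ne fun h => hne' (h ▸ hs)
  have hex : ∃ r, t + q ≤ r ∧ W r = c := by
    obtain ⟨u, -, huc, -⟩ := hloop (t + q)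
    exact ⟨_, le_self_add, huc⟩
  set r := Nat.find hex
  obtain ⟨htr, hr⟩ : t + q ≤ r ∧ W r = c := Nat.find_spec hex
  have hgap : ∀ i, s < i → i < r → W i ≠ c := fun i hsi hir hi => by
    rcases le_or_gt i (t + q) with hi' | hi'
    · exact Nat.findGreatest_is_greatest hsi hi' hi
    · exact Nat.find_min hex hir ⟨hi'.le, hi⟩
  have htr' : t + q < r := htr.lt_of_ne fun h => hne' (h ▸ hr)
  -- the next loop step after `s` cannot lie inside the excursion
  obtain ⟨u, hu, hus, hus1⟩ := hloop s
  have hrs : r ≤ s + u := by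
    by_contra! hlt
    rcases Nat.eq_zero_or_pos u with rfl | hu0
    · exact hgap (s + 1) (by omega) (by omega) hus1
    · exact hgap (s + u) (by omega) hlt hus
  have hprev : W (r - 1) = a := by
    have hR : R (W (r - 1)) c := by
      simpa [Nat.sub_add_cancel (by omega : 1 ≤ r), hr] using hW (r - 1)
    exact (hentry _ hR).resolve_right (hgap _ (by omega) (by omega))
  have hheight_a := height_le_of_avoid hheight hc hW hs (r - 1 - s)
    fun i hi hij => hgap _ (by omega) (by omega)
  rw [show s + (r - 1 - s) = r - 1 by omega, hprev] at hheight_a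
  omega

end OddClosedWalk

theorem isFixedPt_of_iterate_affine {f : ℝ → ℝ} {s e y : ℝ} {q : ℕ}
    (hf : ∀ t, f^[t + 1] y = s * f^[t] y + e) (hy : IsPeriodicPt f q y) (hs : s ^ q ≠ 1) :
    IsFixedPt f y := by
  have hs1 : 1 - s ≠ 0 := fun h => hs (by rw [← sub_eq_zero.1 h, one_pow])
  set p := e / (1 - s)
  have hp : s * p + e = p := by
    simp only [p]
    field_simp
    ring
  have hiter : ∀ t, f^[t] y - p = s ^ t * (y - p) := by
    intro t
    induction t with
    | zero => simp
    | succ t ih => rw [hf]; linear_combination s * ih + hp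
  have hyp : y = p := by
    have h := hiter q
    rw [hy.eq] at h
    have : (1 - s ^ q) * (y - p) = 0 := by linear_combination h
    linarith [(mul_eq_zero.1 this).resolve_left (sub_ne_zero.2 (Ne.symm hs))]
  have hfy := hf 0
  rw [zero_add, iterate_one, iterate_zero_apply] at hfy
  rw [IsFixedPt, hfy, hyp, hp]

/-- A shape of the Markov graph of `π` that leaves the loop at `k + 1` as its only odd cycle of
length `< 2k - 1`. -/
structure MarkovGraphShape (k : ℕ) (π : ℕ → ℕ) (h : ℕ → ℕ) : Prop where
  cross : ∀ u v, MarkovEdge (2 * k + 1) π u v → (u = k + 1 ∧ v = k + 1) ∨ (u ≤ k ↔ ¬v ≤ k)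
  height_le : ∀ u v, MarkovEdge (2 * k + 1) π u v → v ≠ k + 1 → h v ≤ h u + 1
  entry : ∀ u, MarkovEdge (2 * k + 1) π u (k + 1) → u = 1 ∨ u = k + 1
  height_center : h (k + 1) = 0
  height_one : 2 * k - 3 ≤ h 1

section SecondMinimal

variable {k : ℕ} {π : ℕ → ℕ}

theorem floor_iterate_eq_center {h : ℕ → ℕ} (hG : MarkovGraphShape k π h)
    (hmaps : MapsTo π (Icc 1 (2 * k + 1)) (Icc 1 (2 * k + 1)))
    (hcyc : minimalPeriod π 1 = 2 * k + 1) {q : ℕ} (hq : Odd q) (hqk : q < 2 * k - 1) {y : ℝ}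
    (hy : IsPeriodicPt (linInterp (2 * k + 1) π) q y)
    (horb : ∀ t, (linInterp (2 * k + 1) π)^[t] y ∈ Icc (1 : ℝ) (2 * k + 1)) (t : ℕ) :
    ⌊(linInterp (2 * k + 1) π)^[t] y⌋₊ = k + 1 := by
  have hint := iterate_linInterp_ne_natCast hmaps hcyc hq.pos
    (Nat.not_dvd_of_pos_of_lt hq.pos (by omega)) hy
  refine eq_of_odd_periodic_walk hG.cross hG.height_le hG.entry hG.height_center
    (markovEdge_floor_iterate (by exact_mod_cast horb) hint) hq (fun t => ?_)
    (by have := hG.height_one; omega) t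
  simp only [iterate_add_apply, hy.eq]

theorem not_periodicPtOfPeriod_of_odd_lt {h : ℕ → ℕ} (hG : MarkovGraphShape k π h)
    (hmaps : MapsTo π (Icc 1 (2 * k + 1)) (Icc 1 (2 * k + 1)))
    (hcyc : minimalPeriod π 1 = 2 * k + 1) (hπc : π (k + 1) = k + 2) (hπc' : π (k + 2) = k)
    {q : ℕ} (hq : Odd q) (hq1 : 1 < q) (hqk : q < 2 * k - 1) {y : ℝ}
    (horb : ∀ t, (linInterp (2 * k + 1) π)^[t] y ∈ Icc (1 : ℝ) (2 * k + 1)) :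
    ¬PeriodicPtOfPeriod (linInterp (2 * k + 1) π) q y := by
  rintro ⟨hy, hmin⟩
  -- the orbit never leaves `[k + 1, k + 2]`, where the map is `x ↦ (k + 2) - 2 (x - (k + 1))`
  have hstep : ∀ t, (linInterp (2 * k + 1) π)^[t + 1] y =
      -2 * (linInterp (2 * k + 1) π)^[t] y + (3 * k + 4) := by
    intro t
    have hfloor := floor_iterate_eq_center hG hmaps hcyc hq hqk hy horb t
    have hx : (linInterp (2 * k + 1) π)^[t] y ∈ Icc ((k + 1 : ℕ) : ℝ) ((k + 1 : ℕ) + 1) := by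
      rw [← hfloor]
      exact ⟨Nat.floor_le (by linarith [(horb t).1]), (Nat.lt_floor_add_one _).le⟩
    rw [iterate_succ_apply', linInterp_of_mem_Icc (by omega) (by omega) hx, hπc, hπc']
    push_cast
    ring
  have hs : (-2 : ℝ) ^ q ≠ 1 := by
    rw [hq.neg_pow]
    have : (0 : ℝ) < 2 ^ q := by positivity
    linarith
  exact hmin 1 le_rfl hq1 (isFixedPt_of_iterate_affine hstep hy hs)

theorem exists_periodicPtOfPeriod_of_walk {h : ℕ → ℕ} (hG : MarkovGraphShape k π h)
    (hmaps : MapsTo π (Icc 1 (2 * k + 1)) (Icc 1 (2 * k + 1)))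
    (hcyc : minimalPeriod π 1 = 2 * k + 1) (hk : 1 ≤ k) {w : ℕ → ℕ}
    (hw : ∀ t < 2 * k - 1, MarkovEdge (2 * k + 1) π (w t) (w (t + 1)))
    (hclosed : w (2 * k - 1) = w 0) (hw0 : w 0 ≠ k + 1) :
    ∃ x, PeriodicPtOfPeriod (linInterp (2 * k + 1) π) (2 * k - 1) x ∧
      ∀ j, (linInterp (2 * k + 1) π)^[j] x ∈ Icc (1 : ℝ) (2 * k + 1) := by
  set f := linInterp (2 * k + 1) π
  obtain ⟨x, hx, hxw⟩ := exists_isPeriodicPt_of_covering_cycle continuous_linInterp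
    (a := fun t => (w t : ℝ)) (b := fun t => w t + 1) (fun t => by linarith)
    (fun t ht => (hw t ht).Icc_subset_image) (by rw [hclosed]) (by rw [hclosed])
  have hwmem : ∀ t ≤ 2 * k - 1, 1 ≤ w t ∧ w t < 2 * k + 1 := fun t ht => by
    rcases ht.lt_or_eq with ht | rfl
    · exact ⟨(hw t ht).1, (hw t ht).2.1⟩
    · rw [hclosed]
      exact ⟨(hw 0 (by omega)).1, (hw 0 (by omega)).2.1⟩
  have horb : ∀ j, f^[j] x ∈ Icc (1 : ℝ) (2 * k + 1) := fun j => by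
    have hj : j % (2 * k - 1) ≤ 2 * k - 1 := (Nat.mod_lt _ (by omega)).le
    obtain ⟨h1, h2⟩ := hxw _ hj
    obtain ⟨hw1, hw2⟩ := hwmem _ hj
    rw [← hx.iterate_mod_apply]
    constructor
    · exact le_trans (by exact_mod_cast hw1) h1
    · exact h2.trans (by exact_mod_cast hw2)
  refine ⟨x, ?_, horb⟩
  rw [PeriodicPtOfPeriod, ← minimalPeriod_eq_iff_of_pos (by omega)]
  by_contra hne
  -- a shorter odd period would force the itinerary of `x` to stay at `k + 1`
  have hd := hx.minimalPeriod_dvd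
  have hdlt : minimalPeriod f x < 2 * k - 1 := (Nat.le_of_dvd (by omega) hd).lt_of_ne hne
  have hdodd : Odd (minimalPeriod f x) := (Nat.odd_sub (by omega)).2 (by simp) |>.of_dvd_nat hd
  have hcenter := floor_iterate_eq_center hG hmaps hcyc hdodd hdlt (isPeriodicPt_minimalPeriod f x)
    horb 0
  have hw0mem := hwmem 0 (by omega)
  have hint := iterate_linInterp_ne_natCast hmaps hcyc (by omega)
    (Nat.not_dvd_of_pos_of_lt (by omega) (by omega)) hx 0 (i := w 0 + 1) ⟨by omega, by omega⟩
  obtain ⟨h1, h2⟩ := hxw 0 (by omega)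
  rw [iterate_zero_apply] at hcenter hint h1 h2
  have hfloor : ⌊x⌋₊ = w 0 :=
    (Nat.floor_eq_iff ((Nat.cast_nonneg _).trans h1)).2 ⟨h1, h2.lt_of_ne (by exact_mod_cast hint)⟩
  exact hw0 (hfloor ▸ hcenter)

theorem realizedSM_of_markovGraphShape {h : ℕ → ℕ} (hG : MarkovGraphShape k π h)
    (hmaps : MapsTo π (Icc 1 (2 * k + 1)) (Icc 1 (2 * k + 1)))
    (hcyc : minimalPeriod π 1 = 2 * k + 1) (hπc : π (k + 1) = k + 2) (hπc' : π (k + 2) = k)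
    (hk : 1 ≤ k) {w : ℕ → ℕ} (hw : ∀ t < 2 * k - 1, MarkovEdge (2 * k + 1) π (w t) (w (t + 1)))
    (hclosed : w (2 * k - 1) = w 0) (hw0 : w 0 ≠ k + 1) : RealizedSM k π := by
  refine ⟨linInterp (2 * k + 1) π, fun t => t, continuous_linInterp,
    isOrbitWithPerm_linInterp hmaps hcyc, ?_, ?_⟩
  · obtain ⟨x, hx, horb⟩ := exists_periodicPtOfPeriod_of_walk hG hmaps hcyc hk hw hclosed hw0
    exact ⟨x, hx, by simpa using horb⟩
  · rintro q hq hq1 hqk ⟨y, hy, horb⟩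
    exact not_periodicPtOfPeriod_of_odd_lt hG hmaps hcyc hπc hπc' hq hq1 hqk
      (by simpa using horb) hy

end SecondMinimal

section Permutations

variable {k : ℕ} {π : ℕ → ℕ}

/-- A lower bound for the number of steps from `k + 1` to `v` in the Markov graph. -/
def stefanHeight (k v : ℕ) : ℕ :=
  if v = 1 then 2 * k - 3 else if v = 2 then 2 * k - 5 else if v ≤ k then 2 * k + 1 - 2 * v
  else if v = 2 * k - 1 then 2 * k - 6 else if v = 2 * k then 2 * k - 4 else 2 * v - 2 * k - 2

/-- The closed walk `1 → k + 1 → k + 1 → k → k + 2 → k - 1 → ⋯ → 4 → 2k - 2 → 3 → 2k → 1`. -/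
def stefanWalk (k t : ℕ) : ℕ :=
  if t = 0 then 1
  else if t ≤ 2 then k + 1
  else if t ≤ 2 * k - 5 ∧ t % 2 = 1 then k + 1 - (t - 1) / 2
  else if t ≤ 2 * k - 4 ∧ t % 2 = 0 then k + t / 2
  else if t = 2 * k - 3 then 3
  else if t = 2 * k - 2 then 2 * k
  else 1

theorem stefanHeight_cases (hk : 4 ≤ k) {v : ℕ} (h1 : 1 ≤ v) (h2 : v ≤ 2 * k) :
    (v = 1 ∧ stefanHeight k v = 2 * k - 3) ∨ (v = 2 ∧ stefanHeight k v = 2 * k - 5) ∨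
    (3 ≤ v ∧ v ≤ k ∧ stefanHeight k v = 2 * k + 1 - 2 * v) ∨
    (k + 1 ≤ v ∧ v ≤ 2 * k - 2 ∧ stefanHeight k v = 2 * v - 2 * k - 2) ∨
    (v = 2 * k - 1 ∧ stefanHeight k v = 2 * k - 6) ∨
    (v = 2 * k ∧ stefanHeight k v = 2 * k - 4) := by
  unfold stefanHeight
  split_ifs <;> grind

theorem stefanWalk_cases (hk : 4 ≤ k) {t : ℕ} (ht : t ≤ 2 * k - 1) :
    (t = 0 ∧ stefanWalk k t = 1) ∨ (1 ≤ t ∧ t ≤ 2 ∧ stefanWalk k t = k + 1) ∨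
    (3 ≤ t ∧ t ≤ 2 * k - 5 ∧ t % 2 = 1 ∧ stefanWalk k t = k + 1 - (t - 1) / 2) ∨
    (4 ≤ t ∧ t ≤ 2 * k - 4 ∧ t % 2 = 0 ∧ stefanWalk k t = k + t / 2) ∨
    (t = 2 * k - 3 ∧ stefanWalk k t = 3) ∨ (t = 2 * k - 2 ∧ stefanWalk k t = 2 * k) ∨
    (t = 2 * k - 1 ∧ stefanWalk k t = 1) := by
  unfold stefanWalk
  split_ifs <;> grind

def IsStefanVariant (k : ℕ) (π : ℕ → ℕ) : Prop :=
  π 3 = 2 * k + 1 ∧ (π 2 = 2 * k - 1 ∨ π 2 = 2 * k) ∧ (π 4 = 2 * k - 1 ∨ π 4 = 2 * k) ∧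
    (π (2 * k - 1) = 2 ∨ π (2 * k - 1) = 3) ∧ (π (2 * k) = 2 ∨ π (2 * k) = 3) ∧
    ∀ u, u ≠ 2 → u ≠ 3 → u ≠ 4 → u ≠ 2 * k - 1 → u ≠ 2 * k → π u = stefanPerm k u

theorem IsStefanVariant.cases (hk : 4 ≤ k) (hπ : IsStefanVariant k π) {u : ℕ} (h1 : 1 ≤ u)
    (h2 : u ≤ 2 * k + 1) :
    (u = 1 ∧ π u = k + 1) ∨ ((u = 2 ∨ u = 4) ∧ (π u = 2 * k - 1 ∨ π u = 2 * k)) ∨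
    (u = 3 ∧ π u = 2 * k + 1) ∨ (5 ≤ u ∧ u ≤ k + 1 ∧ π u = 2 * k + 3 - u) ∨
    (k + 2 ≤ u ∧ u ≤ 2 * k - 2 ∧ π u = 2 * k + 2 - u) ∨
    ((u = 2 * k - 1 ∨ u = 2 * k) ∧ (π u = 2 ∨ π u = 3)) ∨ (u = 2 * k + 1 ∧ π u = 1) := by
  obtain ⟨h3, h2, h4, h5, h6, hS⟩ := hπ
  by_cases hu : u = 2 ∨ u = 3 ∨ u = 4 ∨ u = 2 * k - 1 ∨ u = 2 * k
  · rcases hu with rfl | rfl | rfl | rfl | rfl <;> grind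
  · rw [hS u (by omega) (by omega) (by omega) (by omega) (by omega), stefanPerm]
    split_ifs <;> grind

theorem IsStefanVariant.markovGraphShape (hk : 4 ≤ k) (hπ : IsStefanVariant k π) :
    MarkovGraphShape k π (stefanHeight k) := by
  have hv := fun u => hπ.cases hk (u := u)
  have hh := fun v => stefanHeight_cases hk (v := v)
  refine ⟨?cross, ?height, ?entry, ?center, ?one⟩
  case cross =>
    rintro u v ⟨h1, h2, h3, h4⟩
    have := hv u h1 (by omega); have := hv (u + 1) (by omega) (by omega)
    omega
  case height =>
    rintro u v ⟨h1, h2, h3, h4⟩ hvc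
    have := hv u h1 (by omega); have := hv (u + 1) (by omega) (by omega)
    have := hh u h1 (by omega); have := hh v (by omega) (by omega)
    omega
  case entry =>
    rintro u ⟨h1, h2, h3, h4⟩
    have := hv u h1 (by omega); have := hv (u + 1) (by omega) (by omega)
    omega
  case center => have := hh (k + 1) (by omega) (by omega); omega
  case one => have := hh 1 le_rfl (by omega); omega

theorem IsStefanVariant.markovEdge_stefanWalk (hk : 4 ≤ k) (hπ : IsStefanVariant k π) {t : ℕ}
    (ht : t < 2 * k - 1) : MarkovEdge (2 * k + 1) π (stefanWalk k t) (stefanWalk k (t + 1)) := by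
  have hv := fun u => hπ.cases hk (u := u)
  have hnext := stefanWalk_cases hk (t := t + 1) (by omega)
  rcases stefanWalk_cases hk (t := t) (by omega) with
    ⟨h₁, hw⟩ | ⟨h₁, h₂, hw⟩ | ⟨h₁, h₂, h₃, hw⟩ | ⟨h₁, h₂, h₃, hw⟩ | ⟨h₁, hw⟩ | ⟨h₁, hw⟩ |
    ⟨h₁, hw⟩ <;>
  · have := hv (stefanWalk k t) (by omega) (by omega)
    have := hv (stefanWalk k t + 1) (by omega) (by omega)
    refine ⟨by omega, by omega, ?_, ?_⟩ <;> omega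

theorem realizedSM_of_isStefanVariant (hk : 4 ≤ k) (hπ : IsStefanVariant k π)
    (hcyc : minimalPeriod π 1 = 2 * k + 1) : RealizedSM k π := by
  have hv := fun u => hπ.cases hk (u := u)
  have hw := fun t => stefanWalk_cases hk (t := t)
  refine realizedSM_of_markovGraphShape (w := stefanWalk k) (hπ.markovGraphShape hk)
    (fun u ⟨h1, h2⟩ => ?_) hcyc
    ?_ ?_ (by omega) (fun t ht => hπ.markovEdge_stefanWalk hk ht) ?_ ?_
  · have := hv u h1 h2
    constructor <;> omega
  · have := hv (k + 1) (by omega) (by omega); omega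
  · have := hv (k + 2) (by omega) (by omega); omega
  · have := hw (2 * k - 1) le_rfl; have := hw 0 (by omega); omega
  · have := hw 0 (by omega); omega

def permA (k : ℕ) : ℕ → ℕ := fun t =>
  if t = 2 then 2 * k else if t = 3 then 2 * k + 1 else if t = 2 * k - 1 then 2
  else if t = 2 * k then 3 else stefanPerm k t

def permB (k : ℕ) : ℕ → ℕ := fun t =>
  if t = 2 then 2 * k - 1 else if t = 3 then 2 * k + 1 else if t = 4 then 2 * k
  else stefanPerm k t

theorem permA_cases (hk : 4 ≤ k) {u : ℕ} (h1 : 1 ≤ u) (h2 : u ≤ 2 * k + 1) :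
    (u = 1 ∧ permA k u = k + 1) ∨ (u = 2 ∧ permA k u = 2 * k) ∨ (u = 3 ∧ permA k u = 2 * k + 1) ∨
    (4 ≤ u ∧ u ≤ k + 1 ∧ permA k u = 2 * k + 3 - u) ∨
    (k + 2 ≤ u ∧ u ≤ 2 * k - 2 ∧ permA k u = 2 * k + 2 - u) ∨
    (u = 2 * k - 1 ∧ permA k u = 2) ∨ (u = 2 * k ∧ permA k u = 3) ∨
    (u = 2 * k + 1 ∧ permA k u = 1) := by
  unfold permA stefanPerm
  split_ifs <;> grind

theorem permB_cases {u : ℕ} (h1 : 1 ≤ u) (h2 : u ≤ 2 * k + 1) :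
    (u = 1 ∧ permB k u = k + 1) ∨ (u = 2 ∧ permB k u = 2 * k - 1) ∨
    (u = 3 ∧ permB k u = 2 * k + 1) ∨ (u = 4 ∧ permB k u = 2 * k) ∨
    (5 ≤ u ∧ u ≤ k + 1 ∧ permB k u = 2 * k + 3 - u) ∨
    (k + 2 ≤ u ∧ u ≤ 2 * k + 1 ∧ permB k u = 2 * k + 2 - u) := by
  unfold permB stefanPerm
  split_ifs <;> grind

/-- The orbit `1 → k + 1 → k + 2 → k → k + 3 → ⋯ → 4 → 2k - 1 → 2 → 2k → 3 → 2k + 1 → 1` of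
`permA`. -/
def orbitA (k j : ℕ) : ℕ :=
  if j = 0 then 1
  else if j % 2 = 0 ∧ j ≤ 2 * k - 2 then k + 1 + j / 2
  else if j % 2 = 1 ∧ j ≤ 2 * k - 5 then k + 2 - (j + 1) / 2
  else if j = 2 * k - 3 then 2
  else if j = 2 * k - 1 then 3
  else if j = 2 * k then 2 * k + 1
  else 1

/-- The orbit `1 → k + 1 → k + 2 → k → ⋯ → 4 → 2k → 2 → 2k - 1 → 3 → 2k + 1 → 1` of `permB`. -/
def orbitB (k j : ℕ) : ℕ :=
  if j = 0 then 1
  else if j % 2 = 0 ∧ j ≤ 2 * k - 6 then k + 1 + j / 2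
  else if j % 2 = 1 ∧ j ≤ 2 * k - 5 then k + 2 - (j + 1) / 2
  else if j = 2 * k - 4 then 2 * k
  else if j = 2 * k - 3 then 2
  else if j = 2 * k - 2 then 2 * k - 1
  else if j = 2 * k - 1 then 3
  else if j = 2 * k then 2 * k + 1
  else 1

theorem orbitA_cases (hk : 4 ≤ k) {j : ℕ} (hj : j ≤ 2 * k + 1) :
    (j = 0 ∧ orbitA k j = 1) ∨ (j % 2 = 0 ∧ 1 ≤ j ∧ j ≤ 2 * k - 2 ∧ orbitA k j = k + 1 + j / 2) ∨
    (j % 2 = 1 ∧ j ≤ 2 * k - 5 ∧ orbitA k j = k + 2 - (j + 1) / 2) ∨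
    (j = 2 * k - 3 ∧ orbitA k j = 2) ∨ (j = 2 * k - 1 ∧ orbitA k j = 3) ∨
    (j = 2 * k ∧ orbitA k j = 2 * k + 1) ∨ (j = 2 * k + 1 ∧ orbitA k j = 1) := by
  unfold orbitA
  split_ifs <;> grind

theorem orbitB_cases (hk : 4 ≤ k) {j : ℕ} (hj : j ≤ 2 * k + 1) :
    (j = 0 ∧ orbitB k j = 1) ∨ (j % 2 = 0 ∧ 1 ≤ j ∧ j ≤ 2 * k - 6 ∧ orbitB k j = k + 1 + j / 2) ∨
    (j % 2 = 1 ∧ j ≤ 2 * k - 5 ∧ orbitB k j = k + 2 - (j + 1) / 2) ∨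
    (j = 2 * k - 4 ∧ orbitB k j = 2 * k) ∨ (j = 2 * k - 3 ∧ orbitB k j = 2) ∨
    (j = 2 * k - 2 ∧ orbitB k j = 2 * k - 1) ∨ (j = 2 * k - 1 ∧ orbitB k j = 3) ∨
    (j = 2 * k ∧ orbitB k j = 2 * k + 1) ∨ (j = 2 * k + 1 ∧ orbitB k j = 1) := by
  unfold orbitB
  split_ifs <;> grind

theorem isStefanVariant_permA (hk : 4 ≤ k) : IsStefanVariant k (permA k) := by
  refine ⟨?_, ?_, ?_, ?_, ?_, fun u h2 h3 h4 h5 h6 => ?_⟩ <;>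
    simp only [permA, stefanPerm] <;> grind

theorem isStefanVariant_permB (hk : 4 ≤ k) : IsStefanVariant k (permB k) := by
  refine ⟨?_, ?_, ?_, ?_, ?_, fun u h2 h3 h4 h5 h6 => ?_⟩ <;>
    simp only [permB, stefanPerm] <;> grind

theorem minimalPeriod_permA (hk : 4 ≤ k) : minimalPeriod (permA k) 1 = 2 * k + 1 := by
  refine minimalPeriod_eq_of_orbit (by omega) (orbitA k) rfl (fun j hj => ?_) ?_ (fun j h1 h2 => ?_)
  · have := orbitA_cases hk (j := j) (by omega); have := orbitA_cases hk (j := j + 1) (by omega)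
    have := permA_cases hk (u := orbitA k j) (by omega) (by omega)
    omega
  · have := orbitA_cases hk (j := 2 * k + 1) le_rfl; omega
  · have := orbitA_cases hk (j := j) (by omega); omega

theorem minimalPeriod_permB (hk : 4 ≤ k) : minimalPeriod (permB k) 1 = 2 * k + 1 := by
  refine minimalPeriod_eq_of_orbit (by omega) (orbitB k) rfl (fun j hj => ?_) ?_ (fun j h1 h2 => ?_)
  · have := orbitB_cases hk (j := j) (by omega); have := orbitB_cases hk (j := j + 1) (by omega)
    have := permB_cases (k := k) (u := orbitB k j) (by omega) (by omega)
    omega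
  · have := orbitB_cases hk (j := 2 * k + 1) le_rfl; omega
  · have := orbitB_cases hk (j := j) (by omega); omega

end Permutations

/-- Two second minimal permutations arising from setting `(2, 2k−2)`. -/
theorem realized_setting_2_2km2 (k : ℕ) (hk : 4 ≤ k) :
    RealizedSM k (fun t =>
      if t = 2 then 2*k else if t = 3 then 2*k+1 else if t = 2*k-1 then 2
      else if t = 2*k then 3 else stefanPerm k t) ∧
    RealizedSM k (fun t =>
      if t = 2 then 2*k-1 else if t = 3 then 2*k+1 else if t = 4 then 2*k
      else stefanPerm k t) :=
  ⟨realizedSM_of_isStefanVariant hk (isStefanVariant_permA hk) (minimalPeriod_permA hk),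
    realizedSM_of_isStefanVariant hk (isStefanVariant_permB hk) (minimalPeriod_permB hk)⟩
end
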